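/- arXiv:2510.18064 — 10 statements merged into one kernel-verified Lean document; each statement's English description precedes it below -/
import Mathlib

section
/- Let k ≥ 2 be an integer, let s_1, …, s_{k-1} be positive integers, set m = s_1 + ⋯ + s_{k-1}, and let t ≥ 2^m be an integer. Let H = K_{s_1,…,s_{k-1},t} be the complete multipartite graph with parts of sizes s_1, …, s_{k-1}, t, and let M = e(K_{s_1,…,s_{k-1},t+2}) be the number of edges of the complete multipartite graph with parts of sizes s_1, …, s_{k-1}, t+2. Then for every integer n ≥ m + t + 2 there exists an H-intersecting family 𝓕 of subgraphs of K_n with |𝓕| ≥ ((t+2)(2^m − 1) + 1) · 2^{C(n,2) − M}. -/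
open SimpleGraph

/-- `G` contains a subgraph isomorphic to `H`, i.e. there is an injective
graph homomorphism from `H` to `G`. -/
def ContainsCopy {α β : Type*} (H : SimpleGraph α) (G : SimpleGraph β) : Prop :=
  ∃ f : H →g G, Function.Injective f

/-- The number of edges of a graph. -/
noncomputable def edgeCount {β : Type*} (G : SimpleGraph β) : ℕ :=
  Nat.card G.edgeSet

/-- A family of graphs on a common vertex type is `H`-intersecting if for any two
members `F₁, F₂` the graph with edge set `E(F₁) ∩ E(F₂)` contains a copy of `H`. -/
def IsIntersectingFamily {α β : Type*} (H : SimpleGraph α)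
    (𝓕 : Finset (SimpleGraph β)) : Prop :=
  ∀ F₁ ∈ 𝓕, ∀ F₂ ∈ 𝓕, ContainsCopy H (F₁ ⊓ F₂)

section Aux

variable {κ : Type*}

/-- The small vertices embed into the multipartite vertex type. -/
def smallEmb (s : κ → ℕ) (t : ℕ) :
    ((i : κ) × Fin (s i)) ↪ ((o : Option κ) × Fin (o.elim t s)) where
  toFun w := ⟨some w.1, w.2⟩
  inj' := by
    rintro ⟨i, x⟩ ⟨j, y⟩ h
    injection h with h1 h2
    obtain rfl : i = j := by injection h1
    cases eq_of_heq h2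
    rfl

lemma smallEmb_fst (s : κ → ℕ) (t : ℕ) (w : (i : κ) × Fin (s i)) :
    (smallEmb s t w).1 = some w.1 := rfl

lemma edgeCount_eq_card_edgeFinset {β : Type*} (G : SimpleGraph β) [Fintype G.edgeSet] :
    edgeCount G = G.edgeFinset.card := by
  rw [edgeCount, Nat.card_eq_fintype_card]
  exact (Set.toFinset_card _).symm

end Aux

/-- The multipartite construction: for `k ≥ 2`, positive part sizes
`s 1, …, s (k-1)`, `m = ∑ s i`, `t ≥ 2 ^ m`, `H = K_{s_1,…,s_{k-1},t}` and
`M = e(K_{s_1,…,s_{k-1},t+2})`, every `n ≥ m + t + 2` admits an `H`-intersecting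
family of subgraphs of `K_n` of size at least `((t+2)(2^m − 1) + 1) · 2^(C(n,2) − M)`. -/
theorem multipartite_construction (k : ℕ) (hk : 2 ≤ k) (s : Fin (k - 1) → ℕ)
    (hs : ∀ i, 0 < s i) (m : ℕ) (hm : m = ∑ i, s i) (t : ℕ) (ht : 2 ^ m ≤ t)
    (n : ℕ) (hn : m + t + 2 ≤ n) :
    ∃ 𝓕 : Finset (SimpleGraph (Fin n)),
      IsIntersectingFamily
        (completeMultipartiteGraph (fun o : Option (Fin (k - 1)) => Fin (o.elim t s))) 𝓕 ∧
      ((t + 2) * (2 ^ m - 1) + 1) *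
        2 ^ (n.choose 2 -
          edgeCount
            (completeMultipartiteGraph
              (fun o : Option (Fin (k - 1)) => Fin (o.elim (t + 2) s)))) ≤ 𝓕.card := by
  classical
  set JG : SimpleGraph ((o : Option (Fin (k - 1))) × Fin (o.elim (t + 2) s)) :=
    completeMultipartiteGraph (fun o : Option (Fin (k - 1)) => Fin (o.elim (t + 2) s)) with hJG
  -- an embedding of the host multipartite graph's vertex set into `Fin n`
  have hcardBig :
      Fintype.card ((o : Option (Fin (k - 1))) × Fin (o.elim (t + 2) s)) = m + t + 2 := by
    rw [Fintype.card_sigma]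
    simp only [Fintype.card_fin]
    rw [univ_option, Finset.sum_insertNone]
    simp only [Option.elim]
    omega
  obtain ⟨e⟩ : Nonempty (((o : Option (Fin (k - 1))) × Fin (o.elim (t + 2) s)) ↪ Fin n) := by
    apply Function.Embedding.nonempty_of_card_le
    rw [hcardBig, Fintype.card_fin]
    omega
  -- the edges of the host copy `J` inside `Fin n`, and all edges of `K_n`
  set EJ : Finset (Sym2 (Fin n)) := JG.edgeFinset.map e.sym2Map with hEJdef
  set ET : Finset (Sym2 (Fin n)) := (⊤ : SimpleGraph (Fin n)).edgeFinset with hETdef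
  have hTnd : ∀ x ∈ ET, ¬ x.IsDiag := by
    intro x hx
    rw [hETdef, mem_edgeFinset] at hx
    exact (⊤ : SimpleGraph (Fin n)).not_isDiag_of_mem_edgeSet hx
  have hsubJT : EJ ⊆ ET := by
    intro x hx
    rw [hEJdef, Finset.mem_map] at hx
    obtain ⟨y, hy, rfl⟩ := hx
    rw [mem_edgeFinset] at hy
    have hnd := JG.not_isDiag_of_mem_edgeSet hy
    rw [hETdef, mem_edgeFinset, edgeSet_top]
    induction y using Sym2.ind with
    | _ a b =>
      simp only [Sym2.mk_isDiag_iff] at hnd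
      show ¬ (e.sym2Map s(a, b)).IsDiag
      have : e.sym2Map s(a, b) = s(e a, e b) := Sym2.map_pair_eq e a b
      rw [this, Sym2.mk_isDiag_iff]
      exact fun hc => hnd (e.injective hc)
  -- the small vertex type
  have hcardSV : Fintype.card ((i : Fin (k - 1)) × Fin (s i)) = m := by
    rw [Fintype.card_sigma]
    simp [hm]
  -- deleted-edges map
  set φ : Fin (t + 2) → (((i : Fin (k - 1)) × Fin (s i)) ↪ Sym2 (Fin n)) := fun v =>
    ⟨fun w => s(e ⟨none, v⟩, e (smallEmb s (t + 2) w)), by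
      intro w1 w2 h
      rw [Sym2.eq_iff] at h
      rcases h with ⟨-, h2⟩ | ⟨h1, -⟩
      · exact (smallEmb s (t + 2)).injective (e.injective h2)
      · exfalso
        have := e.injective h1
        have hfst := congrArg Sigma.fst this
        rw [smallEmb_fst] at hfst
        exact absurd hfst (by simp)⟩ with hφ
  set D : Option (Fin (t + 2) × {S : Finset ((i : Fin (k - 1)) × Fin (s i)) // S.Nonempty}) →
      Finset (Sym2 (Fin n)) :=
    fun a => a.elim ∅ (fun p => p.2.1.map (φ p.1)) with hD
  have hDsub : ∀ a, D a ⊆ EJ := by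
    rintro (_ | ⟨v, S, hS⟩) x hx
    · simp [hD] at hx
    · simp only [hD, Option.elim, Finset.mem_map] at hx
      obtain ⟨w, hw, rfl⟩ := hx
      rw [hEJdef, Finset.mem_map]
      refine ⟨s(⟨none, v⟩, smallEmb s (t + 2) w), ?_, ?_⟩
      · rw [mem_edgeFinset, mem_edgeSet]
        show (⊤ : SimpleGraph (Option (Fin (k - 1)))).Adj _ _
        rw [top_adj]
        intro hc
        rw [smallEmb_fst] at hc
        exact absurd hc (by simp)
      · show e.sym2Map _ = _
        have : e.sym2Map s(⟨none, v⟩, smallEmb s (t + 2) w)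
            = s(e ⟨none, v⟩, e (smallEmb s (t + 2) w)) := Sym2.map_pair_eq e _ _
        rw [this]
        rfl
  have hDinj : Function.Injective D := by
    have hne : ∀ v (S : {S : Finset ((i : Fin (k - 1)) × Fin (s i)) // S.Nonempty}),
        (D (some (v, S))).Nonempty := by
      intro v S
      exact S.2.map
    rintro (_ | ⟨v1, S1⟩) (_ | ⟨v2, S2⟩) h
    · rfl
    · exact absurd (h ▸ hne v2 S2) (by simp [hD])
    · exact absurd (h.symm ▸ hne v1 S1) (by simp [hD])
    · obtain ⟨w1, hw1⟩ := S1.2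
      have hmem : φ v1 w1 ∈ D (some (v2, S2)) := by
        rw [← h]
        simp only [hD, Option.elim, Finset.mem_map]
        exact ⟨w1, hw1, rfl⟩
      simp only [hD, Option.elim, Finset.mem_map] at hmem
      obtain ⟨w2, hw2, heq⟩ := hmem
      have hv : v2 = v1 := by
        have heq' : s(e ⟨none, v2⟩, e (smallEmb s (t + 2) w2))
            = s(e ⟨none, v1⟩, e (smallEmb s (t + 2) w1)) := heq
        rw [Sym2.eq_iff] at heq'
        rcases heq' with ⟨h1, -⟩ | ⟨h1, -⟩
        · have := e.injective h1
          injection this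
        · exfalso
          have := e.injective h1
          have hfst := congrArg Sigma.fst this
          rw [smallEmb_fst] at hfst
          exact absurd hfst (by simp)
      subst hv
      have hS : S1.1 = S2.1 := by
        apply Finset.map_injective (φ v2)
        have h' := h
        simp only [hD, Option.elim] at h'
        exact h'
      obtain ⟨S1, hS1⟩ := S1
      obtain ⟨S2, hS2⟩ := S2
      simp only at hS
      subst hS
      rfl
  -- the family
  set Fgr : (Option (Fin (t + 2) × {S : Finset ((i : Fin (k - 1)) × Fin (s i)) // S.Nonempty}))
      × Finset (Sym2 (Fin n)) → SimpleGraph (Fin n) :=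
    fun p => fromEdgeSet ↑((EJ \ D p.1) ∪ p.2) with hFgr
  set dom : Finset ((Option (Fin (t + 2) × {S : Finset ((i : Fin (k - 1)) × Fin (s i)) // S.Nonempty}))
      × Finset (Sym2 (Fin n))) := Finset.univ ×ˢ (ET \ EJ).powerset with hdom
  have hedge : ∀ (a) (B : Finset (Sym2 (Fin n))), B ⊆ ET \ EJ →
      (Fgr (a, B)).edgeSet = ↑((EJ \ D a) ∪ B) := by
    intro a B hB
    have hdisj : Disjoint (↑((EJ \ D a) ∪ B) : Set (Sym2 (Fin n)))
        {x : Sym2 (Fin n) | x.IsDiag} := by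
      rw [Set.disjoint_left]
      intro x hx hdiag
      refine hTnd x ?_ hdiag
      rw [Finset.mem_coe, Finset.mem_union] at hx
      rcases hx with hx | hx
      · exact hsubJT (Finset.sdiff_subset hx)
      · exact (Finset.mem_sdiff.mp (hB hx)).1
    simp only [hFgr]
    rw [edgeSet_fromEdgeSet, sdiff_eq_left.mpr (show Disjoint _ Sym2.diagSet from hdisj)]
  refine ⟨dom.image Fgr, ?_, ?_⟩
  · -- the intersecting property
    rintro F1 hF1 F2 hF2
    simp only [Finset.mem_image] at hF1 hF2
    obtain ⟨⟨a1, B1⟩, hp1, rfl⟩ := hF1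
    obtain ⟨⟨a2, B2⟩, hp2, rfl⟩ := hF2
    rw [hdom, Finset.mem_product, Finset.mem_powerset] at hp1 hp2
    -- choose `t` vertices of the big part avoiding the (at most two) deleted centers
    set vs : Option (Fin (t + 2) × {S : Finset ((i : Fin (k - 1)) × Fin (s i)) // S.Nonempty})
        → Finset (Fin (t + 2)) := fun a => a.elim ∅ (fun p => {p.1}) with hvs
    have hvscard : ∀ a, (vs a).card ≤ 1 := by rintro (_ | p) <;> simp [hvs]
    obtain ⟨g0⟩ : Nonempty (Fin t ↪ {x : Fin (t + 2) // x ∉ vs a1 ∪ vs a2}) := by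
      apply Function.Embedding.nonempty_of_card_le
      have hcs : Fintype.card {x : Fin (t + 2) // x ∉ vs a1 ∪ vs a2}
          = ((Finset.univ : Finset (Fin (t + 2))) \ (vs a1 ∪ vs a2)).card := by
        rw [Fintype.card_subtype]
        congr 1
        ext x
        simp
      rw [Fintype.card_fin, hcs, Finset.card_sdiff_of_subset (Finset.subset_univ _), Finset.card_univ,
        Fintype.card_fin]
      have hu := Finset.card_union_le (vs a1) (vs a2)
      have h1 := hvscard a1
      have h2 := hvscard a2
      omega
    -- the vertex map of the copy of `H`
    set bigF : (o : Option (Fin (k - 1))) → Fin (o.elim t s) → Fin (o.elim (t + 2) s) :=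
      fun o => Option.rec (motive := fun o => Fin (o.elim t s) → Fin (o.elim (t + 2) s))
        (fun x => (g0 x).1) (fun _ y => y) o with hbigF
    set fv : ((o : Option (Fin (k - 1))) × Fin (o.elim t s))
        → ((o : Option (Fin (k - 1))) × Fin (o.elim (t + 2) s)) :=
      fun p => ⟨p.1, bigF p.1 p.2⟩ with hfv
    have hfvfst : ∀ p, (fv p).1 = p.1 := fun p => rfl
    have hfvinj : Function.Injective fv := by
      rintro ⟨o1, x⟩ ⟨o2, y⟩ h
      injection h with h1 h2
      subst h1
      have h2' : bigF o1 x = bigF o1 y := eq_of_heq h2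
      congr
      cases o1 with
      | none => exact Subtype.val_injective.comp g0.injective h2'
      | some i => exact h2'
    have hbignot : ∀ (x : Fin t), (g0 x).1 ∉ vs a1 ∪ vs a2 := fun x => (g0 x).2
    -- the key adjacency fact
    have hadj : ∀ (a) (B : Finset (Sym2 (Fin n))), B ⊆ ET \ EJ → (a = a1 ∨ a = a2) →
        ∀ p q : ((o : Option (Fin (k - 1))) × Fin (o.elim t s)), p.1 ≠ q.1 →
        (Fgr (a, B)).Adj (e (fv p)) (e (fv q)) := by
      intro a B hB ha p q hpq
      have hne : fv p ≠ fv q := by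
        intro hc
        have := congrArg Sigma.fst hc
        rw [hfvfst, hfvfst] at this
        exact hpq this
      simp only [hFgr]
      rw [fromEdgeSet_adj]
      refine ⟨?_, fun hc => hne (e.injective hc)⟩
      rw [Finset.mem_coe, Finset.mem_union]
      left
      rw [Finset.mem_sdiff]
      constructor
      · rw [hEJdef, Finset.mem_map]
        refine ⟨s(fv p, fv q), ?_, Sym2.map_pair_eq e _ _⟩
        rw [mem_edgeFinset, mem_edgeSet]
        show (⊤ : SimpleGraph (Option (Fin (k - 1)))).Adj _ _
        rw [top_adj]
        rw [hfvfst, hfvfst]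
        exact hpq
      · -- not a deleted edge
        intro hmem
        rcases a with _ | ⟨v, S⟩
        · simp [hD] at hmem
        · simp only [hD, Option.elim, Finset.mem_map] at hmem
          obtain ⟨w, hw, heq⟩ := hmem
          have heq' : s(e ⟨none, v⟩, e (smallEmb s (t + 2) w)) = s(e (fv p), e (fv q)) := heq
          have hvmem : v ∈ vs a1 ∪ vs a2 := by
            rcases ha with rfl | rfl
            · exact Finset.mem_union_left _ (by simp [hvs])
            · exact Finset.mem_union_right _ (by simp [hvs])
          have hbig : ∀ r : ((o : Option (Fin (k - 1))) × Fin (o.elim t s)),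
              fv r ≠ (⟨none, v⟩ : (o : Option (Fin (k - 1))) × Fin (o.elim (t + 2) s)) := by
            rintro ⟨o, x⟩ hc
            cases o with
            | some i => exact absurd (congrArg Sigma.fst hc) (by simp [hfvfst])
            | none =>
              have h2 : bigF none x = v := by injection hc
              have hgv : (g0 x).1 = v := h2
              exact hbignot x (hgv ▸ hvmem)
          rw [Sym2.eq_iff] at heq'
          rcases heq' with ⟨h1, -⟩ | ⟨h1, -⟩ <;>
            exact hbig _ (e.injective h1.symm)
    -- assemble the homomorphism
    refine ⟨⟨fun p => e (fv p), ?_⟩, fun p q h => hfvinj (e.injective h)⟩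
    intro p q hpq
    have hpq' : p.1 ≠ q.1 := by
      have : (⊤ : SimpleGraph (Option (Fin (k - 1)))).Adj p.1 q.1 := hpq
      rw [top_adj] at this
      exact this
    exact ⟨hadj a1 B1 hp1.2 (Or.inl rfl) p q hpq', hadj a2 B2 hp2.2 (Or.inr rfl) p q hpq'⟩
  · -- the cardinality bound
    have hinj : Set.InjOn Fgr dom := by
      rintro ⟨a1, B1⟩ h1 ⟨a2, B2⟩ h2 h
      rw [Finset.mem_coe, hdom, Finset.mem_product, Finset.mem_powerset] at h1 h2
      have hE := congrArg SimpleGraph.edgeSet h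
      rw [hedge a1 B1 h1.2, hedge a2 B2 h2.2] at hE
      have hfs : (EJ \ D a1) ∪ B1 = (EJ \ D a2) ∪ B2 := Finset.coe_injective hE
      have hBd : ∀ (a) (B : Finset (Sym2 (Fin n))), B ⊆ ET \ EJ →
          ((EJ \ D a) ∪ B) \ EJ = B := by
        intro a B hB
        rw [Finset.union_sdiff_distrib, Finset.sdiff_eq_empty_iff_subset.mpr Finset.sdiff_subset,
          Finset.empty_union]
        apply Finset.sdiff_eq_self_of_disjoint
        exact Finset.disjoint_left.mpr fun x hx => (Finset.mem_sdiff.mp (hB hx)).2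
      have hJd : ∀ (a) (B : Finset (Sym2 (Fin n))), B ⊆ ET \ EJ →
          ((EJ \ D a) ∪ B) ∩ EJ = EJ \ D a := by
        intro a B hB
        rw [Finset.union_inter_distrib_right,
          Finset.inter_eq_left.mpr Finset.sdiff_subset,
          Finset.disjoint_iff_inter_eq_empty.mp
            (Finset.disjoint_left.mpr fun x hx => (Finset.mem_sdiff.mp (hB hx)).2),
          Finset.union_empty]
      have hB12 : B1 = B2 := by
        have hc := congrArg (· \ EJ) hfs
        rw [hBd a1 B1 h1.2, hBd a2 B2 h2.2] at hc
        exact hc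
      have hDa : D a1 = D a2 := by
        have hc := congrArg (· ∩ EJ) hfs
        rw [hJd a1 B1 h1.2, hJd a2 B2 h2.2] at hc
        have hc2 := congrArg (EJ \ ·) hc
        rw [Finset.sdiff_sdiff_eq_self (hDsub a1), Finset.sdiff_sdiff_eq_self (hDsub a2)] at hc2
        exact hc2
      have ha12 : a1 = a2 := hDinj hDa
      subst ha12
      subst hB12
      rfl
    rw [Finset.card_image_of_injOn hinj, hdom, Finset.card_product, Finset.card_powerset,
      Finset.card_univ]
    have hIdx : Fintype.card
        (Option (Fin (t + 2) × {S : Finset ((i : Fin (k - 1)) × Fin (s i)) // S.Nonempty}))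
        = (t + 2) * (2 ^ m - 1) + 1 := by
      rw [Fintype.card_option, Fintype.card_prod, Fintype.card_fin]
      have hSc : Fintype.card {S : Finset ((i : Fin (k - 1)) × Fin (s i)) // S.Nonempty}
          = 2 ^ m - 1 := by
        rw [Fintype.card_subtype]
        have hfe : (Finset.univ.filter
            (fun S : Finset ((i : Fin (k - 1)) × Fin (s i)) => S.Nonempty))
            = Finset.univ.erase ∅ := by
          ext S
          simp [Finset.nonempty_iff_ne_empty]
        rw [hfe, Finset.card_erase_of_mem (Finset.mem_univ _), Finset.card_univ,
          Fintype.card_finset, hcardSV]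
      rw [hSc]
    have hcard2 : (ET \ EJ).card = n.choose 2 - edgeCount JG := by
      rw [Finset.card_sdiff_of_subset hsubJT]
      congr 1
      · rw [hETdef, card_edgeFinset_top_eq_card_choose_two, Fintype.card_fin]
      · rw [hEJdef, Finset.card_map, edgeCount_eq_card_edgeFinset]
    rw [hIdx, hcard2]
end

section
/- For every integer n ≥ 6 there exists a P_4-intersecting family 𝓕 of subgraphs of K_n with |𝓕| ≥ 17 · 2^{C(n,2) − 7} = (17/128) · 2^{C(n,2)}. -/
open SimpleGraph

namespace Christofides

def ep1 : Fin 7 → Fin 6 := ![0, 1, 2, 0, 0, 0, 2]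
def ep2 : Fin 7 → Fin 6 := ![1, 2, 3, 3, 4, 5, 4]
def A : Fin 17 → Finset (Fin 7) := ![{0,1,2,3,4}, {0,1,2,3,5}, {0,1,2,3,4,5}, {0,1,2,3,6}, {0,1,3,4,5,6}, {2,3,4,5,6}, {0,2,3,4,5,6}, {1,2,3,4,5,6}, {0,1,2,3,4,5,6}, {0,1,2,4,6}, {0,1,3,4,6}, {0,2,3,4,6}, {1,2,3,4,6}, {0,1,2,4,5,6}, {0,1,4,5,6}, {0,1,2,3,5,6}, {0,1,2,3,4,6}]
def PV : Fin 15 → Fin 6 × Fin 6 × Fin 6 × Fin 6 :=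
  ![(0, 1, 2, 3), (0, 1, 2, 4), (0, 3, 2, 1), (0, 3, 2, 4), (0, 4, 2, 1), (0, 4, 2, 3), (1, 0, 3, 2), (1, 0, 4, 2), (2, 1, 0, 3), (2, 1, 0, 4), (2, 1, 0, 5), (2, 3, 0, 4), (2, 3, 0, 5), (2, 4, 0, 3), (2, 4, 0, 5)]

/-- `m` is an edge-index realizing the pair `(a, b)` (in either order). -/
def Realizes (m : Fin 7) (a b : Fin 6) : Prop :=
  (ep1 m = a ∧ ep2 m = b) ∨ (ep1 m = b ∧ ep2 m = a)

instance : DecidablePred fun p : Fin 7 × Fin 6 × Fin 6 => Realizes p.1 p.2.1 p.2.2 := by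
  unfold Realizes; infer_instance

instance (m : Fin 7) (a b : Fin 6) : Decidable (Realizes m a b) := by
  unfold Realizes; infer_instance

def Pcond (S : Finset (Fin 7)) (k : Fin 15) : Prop :=
  let a := (PV k).1; let b := (PV k).2.1; let c := (PV k).2.2.1; let d := (PV k).2.2.2
  a ≠ b ∧ a ≠ c ∧ a ≠ d ∧ b ≠ c ∧ b ≠ d ∧ c ≠ d ∧
    (∃ m ∈ S, Realizes m a b) ∧ (∃ m ∈ S, Realizes m b c) ∧ (∃ m ∈ S, Realizes m c d)

instance (S : Finset (Fin 7)) (k : Fin 15) : Decidable (Pcond S k) := by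
  unfold Pcond; infer_instance

lemma key : ∀ i j : Fin 17, ∃ k : Fin 15, Pcond (A i ∩ A j) k := by decide

lemma ep_ne : ∀ m : Fin 7, ep1 m ≠ ep2 m := by decide

lemma ep_inj : ∀ m m' : Fin 7,
    ((ep1 m = ep1 m' ∧ ep2 m = ep2 m') ∨ (ep1 m = ep2 m' ∧ ep2 m = ep1 m')) → m = m' := by
  decide

lemma A_inj : ∀ i j : Fin 17, A i = A j → i = j := by decide

end Christofides

open Christofides in
/-- A P₄ copy from an explicit 4-vertex path. -/
lemma containsCopy_path4 {β : Type*} {G : SimpleGraph β} {a b c d : β}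
    (hab : G.Adj a b) (hbc : G.Adj b c) (hcd : G.Adj c d)
    (h1 : a ≠ c) (h2 : a ≠ d) (h3 : b ≠ d) : ContainsCopy (pathGraph 4) G := by
  refine ⟨⟨![a, b, c, d], ?_⟩, ?_⟩
  · intro i j hij
    rw [pathGraph_adj] at hij
    fin_cases i <;> fin_cases j <;>
      simp_all [Matrix.cons_val_zero, Matrix.cons_val_one] <;>
      first
        | exact hab | exact hab.symm | exact hbc | exact hbc.symm
        | exact hcd | exact hcd.symm
  · have hab' := hab.ne
    have hbc' := hbc.ne
    have hcd' := hcd.ne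
    intro i j hij
    fin_cases i <;> fin_cases j <;> simp_all <;>
      first
        | rfl
        | exact absurd hij hab' | exact absurd hij.symm hab'
        | exact absurd hij hbc' | exact absurd hij.symm hbc'
        | exact absurd hij hcd' | exact absurd hij.symm hcd'
        | exact absurd hij h1 | exact absurd hij.symm h1
        | exact absurd hij h2 | exact absurd hij.symm h2
        | exact absurd hij h3 | exact absurd hij.symm h3

/-- Christofides. For every `n ≥ 6` there is a `P₄`-intersecting family
of subgraphs of `K_n` of size at least `17 · 2^(C(n,2) − 7)`. -/
theorem christofides_bound (n : ℕ) (hn : 6 ≤ n) :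
    ∃ 𝓕 : Finset (SimpleGraph (Fin n)),
      IsIntersectingFamily (pathGraph 4) 𝓕 ∧ 17 * 2 ^ (n.choose 2 - 7) ≤ 𝓕.card := by
  classical
  -- embed Fin 6 into Fin n
  set v : Fin 6 → Fin n := fun i => ⟨i.val, lt_of_lt_of_le i.isLt hn⟩ with hv
  have v_inj : Function.Injective v := by
    intro a b h
    exact Fin.ext (congrArg (fun x : Fin n => x.val) h)
  -- the seven special edges as elements of `Sym2 (Fin n)`
  set emap : Fin 7 → Sym2 (Fin n) := fun m => s(v (Christofides.ep1 m), v (Christofides.ep2 m))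
    with hemap
  have emap_inj : Function.Injective emap := by
    intro m m' h
    rw [hemap] at h
    simp only [Sym2.eq, Sym2.rel_iff', Prod.mk.injEq, Prod.swap_prod_mk] at h
    apply Christofides.ep_inj
    rcases h with ⟨h1, h2⟩ | ⟨h1, h2⟩
    · exact Or.inl ⟨v_inj h1, v_inj h2⟩
    · exact Or.inr ⟨v_inj h1, v_inj h2⟩
  have emap_nd : ∀ m, ¬ (emap m).IsDiag := by
    intro m
    simp only [hemap, Sym2.isDiag_iff_proj_eq]
    exact fun h => Christofides.ep_ne m (v_inj h)
  set E7 : Finset (Sym2 (Fin n)) := Finset.univ.image emap with hE7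
  have E7card : E7.card = 7 := by
    rw [hE7, Finset.card_image_of_injective _ emap_inj, Finset.card_univ, Fintype.card_fin]
  have E7sub : E7 ⊆ (⊤ : SimpleGraph (Fin n)).edgeFinset := by
    intro e he
    rw [hE7, Finset.mem_image] at he
    obtain ⟨m, _, rfl⟩ := he
    rw [SimpleGraph.mem_edgeFinset, SimpleGraph.edgeSet_top]
    exact emap_nd m
  set R : Finset (Sym2 (Fin n)) := (⊤ : SimpleGraph (Fin n)).edgeFinset \ E7 with hR
  have Rcard : R.card = n.choose 2 - 7 := by
    rw [hR, Finset.card_sdiff_of_subset E7sub, E7card,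
      SimpleGraph.card_edgeFinset_top_eq_card_choose_two, Fintype.card_fin]
  set B : Fin 17 → Finset (Sym2 (Fin n)) := fun i => (Christofides.A i).image emap with hB
  have Bsub : ∀ i, B i ⊆ E7 := by
    intro i e he
    rw [hB, Finset.mem_image] at he
    obtain ⟨m, _, rfl⟩ := he
    exact Finset.mem_image_of_mem _ (Finset.mem_univ m)
  set φ : Fin 17 × Finset (Sym2 (Fin n)) → SimpleGraph (Fin n) :=
    fun p => SimpleGraph.fromEdgeSet ↑(B p.1 ∪ p.2) with hφ
  set D : Finset (Fin 17 × Finset (Sym2 (Fin n))) := Finset.univ ×ˢ R.powerset with hD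
  -- edge sets are recovered exactly
  have edge_eq : ∀ p ∈ D, (φ p).edgeSet = ↑(B p.1 ∪ p.2) := by
    rintro ⟨i, s⟩ hp
    rw [hD, Finset.mem_product, Finset.mem_powerset] at hp
    rw [hφ]
    simp only [SimpleGraph.edgeSet_fromEdgeSet]
    rw [sdiff_eq_left, Set.disjoint_left]
    intro e he hd
    rw [Finset.mem_coe, Finset.mem_union] at he
    rcases he with he | he
    · have := Bsub i he
      rw [hE7, Finset.mem_image] at this
      obtain ⟨m, _, rfl⟩ := this
      exact emap_nd m hd
    · have : e ∈ R := hp.2 he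
      rw [hR, Finset.mem_sdiff, SimpleGraph.mem_edgeFinset, SimpleGraph.edgeSet_top] at this
      exact this.1 hd
  have adj_of_mem : ∀ p ∈ D, ∀ i : Fin 17, p.1 = i → ∀ m ∈ Christofides.A i,
      (φ p).Adj (v (Christofides.ep1 m)) (v (Christofides.ep2 m)) := by
    rintro ⟨i', s⟩ _ i rfl m hm
    rw [hφ, SimpleGraph.fromEdgeSet_adj]
    constructor
    · apply Finset.mem_coe.mpr
      apply Finset.mem_union_left
      exact Finset.mem_image_of_mem _ hm
    · exact fun h => Christofides.ep_ne m (v_inj h)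
  refine ⟨D.image φ, ?_, ?_⟩
  · -- intersecting family
    rintro F₁ hF₁ F₂ hF₂
    rw [Finset.mem_image] at hF₁ hF₂
    obtain ⟨⟨i, s⟩, hp, rfl⟩ := hF₁
    obtain ⟨⟨j, t⟩, hq, rfl⟩ := hF₂
    obtain ⟨k, hk⟩ := Christofides.key i j
    obtain ⟨hab, hac, had, hbc, hbd, hcd, ⟨m1, hm1, hr1⟩, ⟨m2, hm2, hr2⟩, ⟨m3, hm3, hr3⟩⟩ := hk
    set a := (Christofides.PV k).1
    set b := (Christofides.PV k).2.1
    set c := (Christofides.PV k).2.2.1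
    set d := (Christofides.PV k).2.2.2
    rw [Finset.mem_inter] at hm1 hm2 hm3
    have adj : ∀ m : Fin 7, m ∈ Christofides.A i → m ∈ Christofides.A j →
        ∀ x y : Fin 6, Christofides.Realizes m x y →
        (φ (i, s) ⊓ φ (j, t)).Adj (v x) (v y) := by
      intro m hmi hmj x y hr
      have h1 := adj_of_mem (i, s) hp i rfl m hmi
      have h2 := adj_of_mem (j, t) hq j rfl m hmj
      rcases hr with ⟨rfl, rfl⟩ | ⟨rfl, rfl⟩
      · exact ⟨h1, h2⟩
      · exact ⟨h1.symm, h2.symm⟩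
    exact containsCopy_path4 (adj m1 hm1.1 hm1.2 a b hr1) (adj m2 hm2.1 hm2.2 b c hr2)
      (adj m3 hm3.1 hm3.2 c d hr3)
      (fun h => hac (v_inj h)) (fun h => had (v_inj h)) (fun h => hbd (v_inj h))
  · -- cardinality
    have hinj : Set.InjOn φ ↑D := by
      rintro ⟨i, s⟩ hp ⟨j, t⟩ hq h
      have hp' := hp; have hq' := hq
      rw [Finset.mem_coe, hD, Finset.mem_product, Finset.mem_powerset] at hp' hq'
      have he : (B i ∪ s : Finset (Sym2 (Fin n))) = B j ∪ t := by
        have := congrArg SimpleGraph.edgeSet h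
        rw [edge_eq (i, s) hp, edge_eq (j, t) hq] at this
        exact_mod_cast Finset.coe_inj.mp this
      have hsdisj : Disjoint s E7 := by
        refine Finset.disjoint_left.mpr fun e hes heE => ?_
        have := hp'.2 hes
        rw [hR, Finset.mem_sdiff] at this
        exact this.2 heE
      have htdisj : Disjoint t E7 := by
        refine Finset.disjoint_left.mpr fun e het heE => ?_
        have := hq'.2 het
        rw [hR, Finset.mem_sdiff] at this
        exact this.2 heE
      have hBij : B i = B j := by
        have h1 : (B i ∪ s) ∩ E7 = B i := by
          rw [Finset.union_inter_distrib_right, Finset.inter_eq_left.mpr (Bsub i),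
            Finset.disjoint_iff_inter_eq_empty.mp hsdisj, Finset.union_empty]
        have h2 : (B j ∪ t) ∩ E7 = B j := by
          rw [Finset.union_inter_distrib_right, Finset.inter_eq_left.mpr (Bsub j),
            Finset.disjoint_iff_inter_eq_empty.mp htdisj, Finset.union_empty]
        rw [← h1, ← h2, he]
      have hst : s = t := by
        have h1 : (B i ∪ s) \ E7 = s := by
          rw [Finset.union_sdiff_distrib, Finset.sdiff_eq_empty_iff_subset.mpr (Bsub i),
            Finset.sdiff_eq_self_of_disjoint hsdisj, Finset.empty_union]
        have h2 : (B j ∪ t) \ E7 = t := by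
          rw [Finset.union_sdiff_distrib, Finset.sdiff_eq_empty_iff_subset.mpr (Bsub j),
            Finset.sdiff_eq_self_of_disjoint htdisj, Finset.empty_union]
        rw [← h1, ← h2, he]
      have hij : i = j := by
        apply Christofides.A_inj
        exact Finset.image_injective emap_inj hBij
      rw [hij, hst]
    rw [Finset.card_image_of_injOn hinj, hD, Finset.card_product, Finset.card_univ,
      Fintype.card_fin, Finset.card_powerset, Rcard]
end

section
/- Let s be a positive integer, let t be an integer with t ≥ 2^s, and let n be an integer with n ≥ s + t + 2. Then there exists a K_{s,t}-intersecting family 𝓕 of subgraphs of K_n with |𝓕| ≥ ((t+2)(2^s − 1) + 1) · 2^{C(n,2) − s(t+2)}, and moreover ((t+2)(2^s − 1) + 1) · 2^{C(n,2) − s(t+2)} > 2^{C(n,2) − st}. -/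
open SimpleGraph

namespace BipCon

variable {s t n : ℕ}

/-- The `S`-side vertices. -/
def va (hn : s + t + 2 ≤ n) (i : Fin s) : Fin n :=
  ⟨i.1, lt_of_lt_of_le i.2 (by omega)⟩

/-- The `T`-side vertices. -/
def vb (hn : s + t + 2 ≤ n) (j : Fin (t + 2)) : Fin n :=
  ⟨s + j.1, by have := j.2; omega⟩

lemma va_ne_vb (hn : s + t + 2 ≤ n) (i : Fin s) (j : Fin (t + 2)) :
    va hn i ≠ vb hn j := by
  intro h
  have h1 : (va hn i).1 = (vb hn j).1 := congrArg Fin.val h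
  have h2 : i.1 < s := i.2
  simp only [va, vb] at h1
  omega

lemma va_inj (hn : s + t + 2 ≤ n) : Function.Injective (va hn) := by
  intro i j h
  apply Fin.ext
  have h2 : (va hn i).1 = (va hn j).1 := congrArg Fin.val h
  exact h2

lemma vb_inj (hn : s + t + 2 ≤ n) : Function.Injective (vb hn) := by
  intro i j h
  have := congrArg Fin.val h
  simp only [vb] at this
  exact Fin.ext (by omega)

lemma sym2_eq_iff (hn : s + t + 2 ≤ n) (i i' : Fin s) (j j' : Fin (t + 2)) :
    s(va hn i, vb hn j) = s(va hn i', vb hn j') ↔ i = i' ∧ j = j' := by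
  constructor
  · intro h
    rw [Sym2.eq_iff] at h
    rcases h with ⟨h1, h2⟩ | ⟨h1, h2⟩
    · exact ⟨va_inj hn h1, vb_inj hn h2⟩
    · exact absurd h1 (va_ne_vb hn i j')
  · rintro ⟨rfl, rfl⟩; rfl

/-- The set of `S`–`T` bipartite pairs. -/
def pairB (hn : s + t + 2 ≤ n) : Finset (Sym2 (Fin n)) :=
  Finset.univ.image (fun p : Fin s × Fin (t + 2) => s(va hn p.1, vb hn p.2))

lemma mem_pairB (hn : s + t + 2 ≤ n) (e : Sym2 (Fin n)) :
    e ∈ pairB hn ↔ ∃ i j, e = s(va hn i, vb hn j) := by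
  simp only [pairB, Finset.mem_image, Finset.mem_univ, true_and, Prod.exists]
  constructor
  · rintro ⟨i, j, rfl⟩; exact ⟨i, j, rfl⟩
  · rintro ⟨i, j, rfl⟩; exact ⟨i, j, rfl⟩

lemma card_pairB (hn : s + t + 2 ≤ n) : (pairB hn).card = s * (t + 2) := by
  rw [pairB, Finset.card_image_of_injective _ ?_, Finset.card_univ,
    Fintype.card_prod, Fintype.card_fin, Fintype.card_fin]
  intro p q h
  rw [sym2_eq_iff hn] at h
  exact Prod.ext h.1 h.2

lemma pairB_subset (hn : s + t + 2 ≤ n) :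
    pairB hn ⊆ (⊤ : SimpleGraph (Fin n)).edgeFinset := by
  intro e he
  rw [mem_pairB] at he
  obtain ⟨i, j, rfl⟩ := he
  rw [SimpleGraph.mem_edgeFinset, SimpleGraph.edgeSet_top]
  simp only [Set.mem_compl_iff, Sym2.mem_diagSet, Sym2.isDiag_iff_proj_eq]
  exact va_ne_vb hn i j

/-- Index type for the allowed bipartite patterns. -/
abbrev D (s t : ℕ) : Type := Option (Fin (t + 2) × {A : Finset (Fin s) // A.Nonempty})

/-- The `T`-vertex that a pattern may omit edges at. -/
def vert : D s t → Fin (t + 2)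
  | none => 0
  | some p => p.1

/-- The allowed bipartite patterns. -/
def psi (hn : s + t + 2 ≤ n) : D s t → Finset (Sym2 (Fin n))
  | none => pairB hn
  | some p => pairB hn \ p.2.1.image (fun i => s(va hn i, vb hn p.1))

lemma psi_subset (hn : s + t + 2 ≤ n) (d : D s t) : psi hn d ⊆ pairB hn := by
  cases d with
  | none => exact Finset.Subset.refl _
  | some p => exact Finset.sdiff_subset

lemma mem_psi (hn : s + t + 2 ≤ n) (d : D s t) (i : Fin s) (j : Fin (t + 2))
    (hj : j ≠ vert d) : s(va hn i, vb hn j) ∈ psi hn d := by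
  have hB : s(va hn i, vb hn j) ∈ pairB hn := (mem_pairB hn _).2 ⟨i, j, rfl⟩
  cases d with
  | none => exact hB
  | some p =>
      rw [psi, Finset.mem_sdiff]
      refine ⟨hB, ?_⟩
      simp only [Finset.mem_image, not_exists, not_and]
      intro k _ h
      rw [sym2_eq_iff hn] at h
      exact hj (h.2 ▸ rfl)

lemma psi_inj (hn : s + t + 2 ≤ n) : Function.Injective (psi hn) := by
  have key : ∀ (p : Fin (t + 2) × {A : Finset (Fin s) // A.Nonempty}),
      psi hn (some p) ≠ pairB hn := by
    rintro ⟨v, A, hA⟩ h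
    obtain ⟨i, hi⟩ := hA
    have hB : s(va hn i, vb hn v) ∈ pairB hn := (mem_pairB hn _).2 ⟨i, v, rfl⟩
    rw [← h, psi, Finset.mem_sdiff] at hB
    exact hB.2 (Finset.mem_image_of_mem _ hi)
  intro d₁ d₂ h
  cases d₁ with
  | none =>
      cases d₂ with
      | none => rfl
      | some p => exact absurd h.symm (key p)
  | some p₁ =>
      cases d₂ with
      | none => exact absurd h (key p₁)
      | some p₂ =>
          obtain ⟨v₁, A₁, hA₁⟩ := p₁
          obtain ⟨v₂, A₂, hA₂⟩ := p₂
          simp only [psi] at h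
          have himg1 : A₁.image (fun i => s(va hn i, vb hn v₁)) ⊆ pairB hn := by
            intro e he
            simp only [Finset.mem_image] at he
            obtain ⟨i, _, rfl⟩ := he
            exact (mem_pairB hn _).2 ⟨i, v₁, rfl⟩
          have himg2 : A₂.image (fun i => s(va hn i, vb hn v₂)) ⊆ pairB hn := by
            intro e he
            simp only [Finset.mem_image] at he
            obtain ⟨i, _, rfl⟩ := he
            exact (mem_pairB hn _).2 ⟨i, v₂, rfl⟩
          have himg : A₁.image (fun i => s(va hn i, vb hn v₁))
              = A₂.image (fun i => s(va hn i, vb hn v₂)) := by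
            have := congrArg (fun X => pairB hn \ X) h
            simpa only [Finset.sdiff_sdiff_eq_self himg1,
              Finset.sdiff_sdiff_eq_self himg2] using this
          -- get v₁ = v₂
          obtain ⟨i, hi⟩ := hA₁
          have : s(va hn i, vb hn v₁) ∈ A₂.image (fun i => s(va hn i, vb hn v₂)) := by
            rw [← himg]; exact Finset.mem_image_of_mem _ hi
          simp only [Finset.mem_image] at this
          obtain ⟨k, _, hk⟩ := this
          rw [sym2_eq_iff hn] at hk
          have hv : v₁ = v₂ := hk.2.symm
          subst hv
          -- get A₁ = A₂
          have hAeq : A₁ = A₂ := by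
            apply Finset.image_injective (f := fun i => s(va hn i, vb hn v₁)) ?_ himg
            intro x y hxy
            rw [sym2_eq_iff hn] at hxy
            exact hxy.1
          subst hAeq
          rfl

lemma card_D : Fintype.card (D s t) = (t + 2) * (2 ^ s - 1) + 1 := by
  classical
  rw [Fintype.card_option, Fintype.card_prod, Fintype.card_fin]
  congr 2
  have e : {A : Finset (Fin s) // A.Nonempty} ≃ {A : Finset (Fin s) // ¬A = ∅} :=
    Equiv.subtypeEquivRight (fun A => by simp [Finset.nonempty_iff_ne_empty])
  rw [Fintype.card_congr e, Fintype.card_subtype_compl, Fintype.card_subtype_eq,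
    Fintype.card_finset, Fintype.card_fin]

end BipCon

open BipCon in
/-- For `s ≥ 1`, `t ≥ 2^s` and `n ≥ s + t + 2`, there exists a
`K_{s,t}`-intersecting family of subgraphs of `K_n` of size at least
`((t+2)(2^s − 1) + 1) · 2^(C(n,2) − s(t+2))`, and this quantity exceeds the trivial
bound `2^(C(n,2) − st)`. -/
theorem bipartite_construction (s t n : ℕ) (hs : 0 < s) (ht : 2 ^ s ≤ t)
    (hn : s + t + 2 ≤ n) :
    (∃ 𝓕 : Finset (SimpleGraph (Fin n)),
      IsIntersectingFamily (completeBipartiteGraph (Fin s) (Fin t)) 𝓕 ∧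
      ((t + 2) * (2 ^ s - 1) + 1) * 2 ^ (n.choose 2 - s * (t + 2)) ≤ 𝓕.card) ∧
    ((t + 2) * (2 ^ s - 1) + 1) * 2 ^ (n.choose 2 - s * (t + 2)) >
      2 ^ (n.choose 2 - s * t) := by
  classical
  constructor
  · -- the construction
    set U : Finset (Sym2 (Fin n)) := (⊤ : SimpleGraph (Fin n)).edgeFinset \ pairB hn with hU
    have hUcard : U.card = n.choose 2 - s * (t + 2) := by
      rw [hU, Finset.card_sdiff_of_subset (pairB_subset hn),
        SimpleGraph.card_edgeFinset_top_eq_card_choose_two, Fintype.card_fin,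
        card_pairB hn]
    set φ : D s t × Finset (Sym2 (Fin n)) → SimpleGraph (Fin n) :=
      fun q => SimpleGraph.fromEdgeSet ↑(psi hn q.1 ∪ q.2) with hφ
    set Dom : Finset (D s t × Finset (Sym2 (Fin n))) :=
      Finset.univ ×ˢ U.powerset with hDom
    refine ⟨Dom.image φ, ?_, ?_⟩
    · -- intersecting
      intro F₁ hF₁ F₂ hF₂
      rw [Finset.mem_image] at hF₁ hF₂
      obtain ⟨⟨d₁, W₁⟩, -, rfl⟩ := hF₁
      obtain ⟨⟨d₂, W₂⟩, -, rfl⟩ := hF₂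
      -- choose t vertices of T avoiding vert d₁, vert d₂
      have hT' : t ≤ ((Finset.univ : Finset (Fin (t + 2))) \ {vert d₁, vert d₂}).card := by
        have h1 : ({vert d₁, vert d₂} : Finset (Fin (t + 2))).card ≤ 2 :=
          Finset.card_insert_le _ _ |>.trans (by simp)
        have h2 := Finset.card_sdiff_add_card_inter
          (Finset.univ : Finset (Fin (t + 2))) {vert d₁, vert d₂}
        have h3 : ((Finset.univ : Finset (Fin (t+2))) ∩ {vert d₁, vert d₂}).card ≤ 2 :=
          (Finset.card_le_card (Finset.inter_subset_right)).trans h1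
        have h4 : (Finset.univ : Finset (Fin (t + 2))).card = t + 2 := by
          rw [Finset.card_univ, Fintype.card_fin]
        omega
      obtain ⟨T'', hT''sub, hT''card⟩ := Finset.exists_subset_card_eq hT'
      set g : Fin t → Fin (t + 2) := fun j => (T''.orderIsoOfFin hT''card j : Fin (t + 2))
        with hg
      have hg_inj : Function.Injective g := by
        intro x y hxy
        exact (T''.orderIsoOfFin hT''card).injective (Subtype.ext hxy)
      have hg_ne : ∀ j (d : D s t), d = d₁ ∨ d = d₂ → g j ≠ vert d := by
        intro j d hd hgj
        have hmem : g j ∈ T'' := (T''.orderIsoOfFin hT''card j).2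
        have := hT''sub hmem
        rw [Finset.mem_sdiff] at this
        apply this.2
        rcases hd with rfl | rfl
        · exact hgj ▸ Finset.mem_insert_self _ _
        · exact hgj ▸ Finset.mem_insert_of_mem (Finset.mem_singleton_self _)
      set f : Fin s ⊕ Fin t → Fin n := Sum.elim (va hn) (fun j => vb hn (g j)) with hf
      have hadj : ∀ i j, (φ (d₁, W₁) ⊓ φ (d₂, W₂)).Adj (va hn i) (vb hn (g j)) := by
        intro i j
        rw [SimpleGraph.inf_adj]
        constructor <;>
        · rw [hφ, SimpleGraph.fromEdgeSet_adj]
          refine ⟨?_, va_ne_vb hn _ _⟩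
          rw [Finset.mem_coe, Finset.mem_union]
          left
          first
            | exact mem_psi hn d₁ i (g j) (hg_ne j d₁ (Or.inl rfl))
            | exact mem_psi hn d₂ i (g j) (hg_ne j d₂ (Or.inr rfl))
      refine ⟨⟨f, ?_⟩, ?_⟩
      · intro x y hxy
        rcases x with x | x <;> rcases y with y | y
        · simp at hxy
        · exact hadj x y
        · exact (hadj y x).symm
        · simp at hxy
      · intro x y hxy
        rcases x with x | x <;> rcases y with y | y <;>
          simp only [hf, Sum.elim_inl, Sum.elim_inr] at hxy
        · exact congrArg Sum.inl (va_inj hn hxy)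
        · exact absurd hxy (va_ne_vb hn _ _)
        · exact absurd hxy.symm (va_ne_vb hn _ _)
        · exact congrArg Sum.inr (hg_inj (vb_inj hn hxy))
    · -- cardinality
      have hinj : Set.InjOn φ Dom := by
        rintro ⟨d₁, W₁⟩ hq₁ ⟨d₂, W₂⟩ hq₂ h
        have hW₁ : W₁ ⊆ U := by
          have h' := Finset.mem_coe.1 hq₁
          rw [hDom, Finset.mem_product, Finset.mem_powerset] at h'
          exact h'.2
        have hW₂ : W₂ ⊆ U := by
          have h' := Finset.mem_coe.1 hq₂
          rw [hDom, Finset.mem_product, Finset.mem_powerset] at h'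
          exact h'.2
        -- edge sets are equal as finsets
        have hnd : ∀ (d : D s t) (W : Finset (Sym2 (Fin n))), W ⊆ U →
            ∀ e ∈ psi hn d ∪ W, ¬e.IsDiag := by
          intro d W hW e he
          rw [Finset.mem_union] at he
          have he' : e ∈ (⊤ : SimpleGraph (Fin n)).edgeFinset := by
            rcases he with he | he
            · exact pairB_subset hn (psi_subset hn d he)
            · exact (Finset.mem_sdiff.1 (hW he)).1
          rw [SimpleGraph.mem_edgeFinset, SimpleGraph.edgeSet_top] at he'
          exact he'
        have hedge : ∀ (d : D s t) (W : Finset (Sym2 (Fin n))), W ⊆ U →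
            (SimpleGraph.fromEdgeSet (↑(psi hn d ∪ W) : Set (Sym2 (Fin n)))).edgeSet
              = ↑(psi hn d ∪ W) := by
          intro d W hW
          rw [SimpleGraph.edgeSet_fromEdgeSet, sdiff_eq_left]
          rw [Set.disjoint_left]
          intro e he hediag
          exact hnd d W hW e (Finset.mem_coe.1 he) hediag
        have heq : psi hn d₁ ∪ W₁ = psi hn d₂ ∪ W₂ := by
          have := congrArg SimpleGraph.edgeSet h
          rw [hφ] at this
          simp only at this
          rw [hedge d₁ W₁ hW₁, hedge d₂ W₂ hW₂] at this
          exact_mod_cast Finset.coe_inj.1 this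
        have hdisj : ∀ (W : Finset (Sym2 (Fin n))), W ⊆ U → W ∩ pairB hn = ∅ := by
          intro W hW
          rw [Finset.eq_empty_iff_forall_notMem]
          intro e he
          rw [Finset.mem_inter] at he
          exact (Finset.mem_sdiff.1 (hW he.1)).2 he.2
        have hrec : ∀ (d : D s t) (W : Finset (Sym2 (Fin n))), W ⊆ U →
            (psi hn d ∪ W) ∩ pairB hn = psi hn d := by
          intro d W hW
          rw [Finset.union_inter_distrib_right, hdisj W hW, Finset.union_empty,
            Finset.inter_eq_left.2 (psi_subset hn d)]
        have hrec2 : ∀ (d : D s t) (W : Finset (Sym2 (Fin n))), W ⊆ U →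
            (psi hn d ∪ W) \ pairB hn = W := by
          intro d W hW
          rw [Finset.union_sdiff_distrib, Finset.sdiff_eq_empty_iff_subset.2
            (psi_subset hn d), Finset.empty_union, Finset.sdiff_eq_self_iff_disjoint]
          rw [Finset.disjoint_left]
          intro e he hB
          exact (Finset.mem_sdiff.1 (hW he)).2 hB
        have hd : psi hn d₁ = psi hn d₂ := by
          rw [← hrec d₁ W₁ hW₁, ← hrec d₂ W₂ hW₂, heq]
        have hWeq : W₁ = W₂ := by
          rw [← hrec2 d₁ W₁ hW₁, ← hrec2 d₂ W₂ hW₂, heq]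
        exact Prod.ext (psi_inj hn hd) hWeq
      rw [Finset.card_image_of_injOn hinj, hDom, Finset.card_product,
        Finset.card_univ, Finset.card_powerset, hUcard, card_D]
  · -- arithmetic
    have hC : s * (t + 2) ≤ n.choose 2 := by
      have h1 : (s + t + 2).choose 2 ≤ n.choose 2 := Nat.choose_le_choose 2 hn
      have h2 : (s + t + 2).choose 2 = (s + t + 2) * (s + t + 1) / 2 := by
        have h0 : s + t + 2 - 1 = s + t + 1 := by omega
        rw [Nat.choose_two_right, h0]
      have h3 : s * (t + 2) ≤ (s + t + 2) * (s + t + 1) / 2 := by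
        rw [Nat.le_div_iff_mul_le (by norm_num)]
        nlinarith [hs]
      omega
    have hsplit : n.choose 2 - s * t = (n.choose 2 - s * (t + 2)) + 2 * s := by
      have : s * (t + 2) = s * t + 2 * s := by ring
      omega
    rw [hsplit, pow_add]
    have hp : 2 ≤ 2 ^ s := by
      calc (2 : ℕ) = 2 ^ 1 := (pow_one 2).symm
      _ ≤ 2 ^ s := Nat.pow_le_pow_right (by norm_num) hs
    have hbig : 2 ^ (2 * s) < (t + 2) * (2 ^ s - 1) + 1 := by
      obtain ⟨q, hq⟩ : ∃ q, 2 ^ s = q + 2 := ⟨2 ^ s - 2, by omega⟩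
      have ht' : q + 2 ≤ t := by omega
      rw [two_mul, pow_add, hq]
      have h1 : q + 2 - 1 = q + 1 := by omega
      rw [h1]
      nlinarith [ht']
    have hpos : 0 < 2 ^ (n.choose 2 - s * (t + 2)) := pow_pos (by norm_num) _
    calc 2 ^ (n.choose 2 - s * (t + 2)) * 2 ^ (2 * s)
        = 2 ^ (2 * s) * 2 ^ (n.choose 2 - s * (t + 2)) := Nat.mul_comm _ _
      _ < ((t + 2) * (2 ^ s - 1) + 1) * 2 ^ (n.choose 2 - s * (t + 2)) :=
          mul_lt_mul_of_pos_right hbig hpos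
end

section
/- For every integer n ≥ 8 there exists a K_{2,4}-intersecting family 𝓕 of subgraphs of K_n with |𝓕| ≥ 19 · 2^{C(n,2) − 12}; note 19 · 2^{C(n,2) − 12} > 2^{C(n,2) − 8}, the trivial bound for K_{2,4}. -/
open SimpleGraph

open SimpleGraph Finset

namespace K24aux

variable {n : ℕ}

def va (hn : 8 ≤ n) (x : Fin 2) : Fin n := ⟨x.val, by have := x.isLt; omega⟩
def vb (hn : 8 ≤ n) (i : Fin 6) : Fin n := ⟨2 + i.val, by have := i.isLt; omega⟩

lemma va_ne_vb (hn : 8 ≤ n) (x : Fin 2) (i : Fin 6) : va hn x ≠ vb hn i := by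
  intro h
  have h2 := congrArg Fin.val h
  simp only [va, vb] at h2
  have := x.isLt
  omega

def ed (hn : 8 ≤ n) (p : Fin 2 × Fin 6) : Sym2 (Fin n) := s(va hn p.1, vb hn p.2)

lemma va_inj (hn : 8 ≤ n) : Function.Injective (va hn) := by
  intro x y h
  have := congrArg Fin.val h
  simp only [va] at this
  exact Fin.ext this

lemma vb_inj (hn : 8 ≤ n) : Function.Injective (vb hn) := by
  intro x y h
  have := congrArg Fin.val h
  simp only [vb] at this
  exact Fin.ext (by omega)

lemma ed_inj (hn : 8 ≤ n) : Function.Injective (ed hn) := by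
  intro p q h
  rw [ed, ed, Sym2.eq_iff] at h
  rcases h with ⟨h1, h2⟩ | ⟨h1, h2⟩
  · exact Prod.ext (va_inj hn h1) (vb_inj hn h2)
  · exact absurd h1 (va_ne_vb hn _ _)

abbrev Dt := Option (Fin 6 × {s : Finset (Fin 2) // s ≠ Finset.univ})

lemma card_Dt : Fintype.card Dt = 19 := by decide

def cfg : Dt → Fin 6 → Finset (Fin 2)
  | none, _ => Finset.univ
  | some (j, s), i => if i = j then s.1 else Finset.univ

lemma cfg_inj : Function.Injective cfg := by
  intro d d' h
  match d, d' with
  | none, none => rfl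
  | none, some (j, s) =>
    have := congrFun h j
    simp [cfg] at this
    exact absurd this.symm s.2
  | some (j, s), none =>
    have := congrFun h j
    simp [cfg] at this
    exact absurd this s.2
  | some (j, s), some (j', s') =>
    by_cases hj : j = j'
    · subst hj
      have := congrFun h j
      simp [cfg] at this
      simp [Subtype.ext this]
    · have := congrFun h j
      simp [cfg, hj] at this
      exact absurd this s.2

lemma cfg_bad_card (d : Dt) :
    (Finset.univ.filter fun i => cfg d i ≠ Finset.univ).card ≤ 1 := by
  match d with
  | none => simp [cfg]
  | some (j, s) =>
    have : (Finset.univ.filter fun i => cfg (some (j, s)) i ≠ Finset.univ) ⊆ {j} := by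
      intro i hi
      rw [Finset.mem_filter] at hi; simp only [cfg] at hi
      by_contra hij
      simp only [Finset.mem_singleton] at hij
      exact hi.2 (by rw [if_neg hij])
    calc _ ≤ ({j} : Finset (Fin 6)).card := Finset.card_le_card this
    _ = 1 := Finset.card_singleton j

def baseEdges (hn : 8 ≤ n) (d : Dt) : Finset (Sym2 (Fin n)) :=
  (Finset.univ.filter fun p : Fin 2 × Fin 6 => p.1 ∈ cfg d p.2).image (ed hn)

lemma mem_baseEdges (hn : 8 ≤ n) (d : Dt) (p : Fin 2 × Fin 6) :
    ed hn p ∈ baseEdges hn d ↔ p.1 ∈ cfg d p.2 := by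
  constructor
  · intro h
    obtain ⟨q, hq, hqe⟩ := Finset.mem_image.1 h
    obtain rfl := ed_inj hn hqe
    exact (Finset.mem_filter.1 hq).2
  · intro h
    exact Finset.mem_image.2 ⟨p, Finset.mem_filter.2 ⟨Finset.mem_univ _, h⟩, rfl⟩

lemma baseEdges_inj (hn : 8 ≤ n) : Function.Injective (baseEdges hn) := by
  intro d d' h
  apply cfg_inj
  funext i
  ext x
  rw [← mem_baseEdges hn d (x, i), h, mem_baseEdges]

def P (hn : 8 ≤ n) : Finset (Sym2 (Fin n)) := Finset.univ.image (ed hn)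

lemma baseEdges_subset_P (hn : 8 ≤ n) (d : Dt) : baseEdges hn d ⊆ P hn :=
  Finset.image_subset_image (Finset.filter_subset _ _)

lemma card_P (hn : 8 ≤ n) : (P hn).card = 12 := by
  rw [P, Finset.card_image_of_injective _ (ed_inj hn)]
  simp

lemma P_subset (hn : 8 ≤ n) : P hn ⊆ (⊤ : SimpleGraph (Fin n)).edgeFinset := by
  intro e he
  obtain ⟨p, _, rfl⟩ := Finset.mem_image.1 he
  rw [mem_edgeFinset, ed, mem_edgeSet, top_adj]
  exact va_ne_vb hn p.1 p.2

def R (hn : 8 ≤ n) : Finset (Sym2 (Fin n)) := (⊤ : SimpleGraph (Fin n)).edgeFinset \ P hn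

lemma card_R (hn : 8 ≤ n) : (R hn).card = n.choose 2 - 12 := by
  rw [R, Finset.card_sdiff_of_subset (P_subset hn), card_P]
  congr 1
  rw [card_edgeFinset_top_eq_card_choose_two, Fintype.card_fin]

lemma edgeSet_member (hn : 8 ≤ n) (d : Dt) {T : Finset (Sym2 (Fin n))} (hT : T ⊆ R hn) :
    (fromEdgeSet ((baseEdges hn d ∪ T : Finset (Sym2 (Fin n))) : Set (Sym2 (Fin n)))).edgeSet
      = ((baseEdges hn d ∪ T : Finset (Sym2 (Fin n))) : Set (Sym2 (Fin n))) := by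
  rw [edgeSet_fromEdgeSet, _root_.sdiff_eq_self_iff_disjoint, disjoint_comm]
  rw [Set.disjoint_left]
  intro e he hdiag
  rw [Sym2.diagSet, Set.mem_setOf_eq] at hdiag
  rw [Finset.mem_coe, Finset.mem_union] at he
  rcases he with he | he
  · obtain ⟨p, _, rfl⟩ := Finset.mem_image.1 he
    rw [ed, Sym2.isDiag_iff_proj_eq] at hdiag
    exact va_ne_vb hn p.1 p.2 hdiag
  · have : e ∈ (⊤ : SimpleGraph (Fin n)).edgeSet := by
      have := (Finset.mem_sdiff.1 (hT he)).1
      rwa [mem_edgeFinset] at this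
    exact (⊤ : SimpleGraph (Fin n)).not_isDiag_of_mem_edgeSet this hdiag

lemma member_adj (hn : 8 ≤ n) (d : Dt) (T : Finset (Sym2 (Fin n))) (x : Fin 2) (i : Fin 6)
    (hi : cfg d i = Finset.univ) :
    (fromEdgeSet ((baseEdges hn d ∪ T : Finset (Sym2 (Fin n))) : Set (Sym2 (Fin n)))).Adj (va hn x) (vb hn i) := by
  rw [fromEdgeSet_adj]
  refine ⟨?_, va_ne_vb hn x i⟩
  have h1 : ed hn (x, i) ∈ baseEdges hn d :=
    (mem_baseEdges hn d (x, i)).2 (by rw [hi]; exact Finset.mem_univ x)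
  exact Finset.mem_coe.2 (Finset.mem_union_left T h1)

end K24aux

namespace K24aux

lemma good_card (d d' : Dt) :
    4 ≤ (Finset.univ.filter fun i : Fin 6 =>
      cfg d i = Finset.univ ∧ cfg d' i = Finset.univ).card := by
  have hb1 := cfg_bad_card d
  have hb2 := cfg_bad_card d'
  have hsub : (Finset.univ.filter fun i : Fin 6 =>
      ¬(cfg d i = Finset.univ ∧ cfg d' i = Finset.univ)) ⊆
      (Finset.univ.filter fun i => cfg d i ≠ Finset.univ) ∪
      (Finset.univ.filter fun i => cfg d' i ≠ Finset.univ) := by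
    intro i hi
    simp only [Finset.mem_filter, Finset.mem_union, Finset.mem_univ, true_and] at hi ⊢
    tauto
  have hc := le_trans (Finset.card_le_card hsub)
      (le_trans (Finset.card_union_le _ _) (by omega : _ ≤ 2))
  have htot := Finset.card_filter_add_card_filter_not
    (s := (Finset.univ : Finset (Fin 6)))
    (p := fun i => cfg d i = Finset.univ ∧ cfg d' i = Finset.univ)
  have h6 : (Finset.univ : Finset (Fin 6)).card = 6 := by simp
  omega

def famMap (hn : 8 ≤ n) (q : Dt × Finset (Sym2 (Fin n))) : SimpleGraph (Fin n) :=
  fromEdgeSet ((baseEdges hn q.1 ∪ q.2 : Finset (Sym2 (Fin n))) : Set (Sym2 (Fin n)))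

lemma member_contains (hn : 8 ≤ n) (d d' : Dt) (T T' : Finset (Sym2 (Fin n))) :
    ContainsCopy (completeBipartiteGraph (Fin 2) (Fin 4))
      (famMap hn (d, T) ⊓ famMap hn (d', T')) := by
  obtain ⟨t, htJ, htc⟩ := Finset.exists_subset_card_eq (good_card d d')
  set σ := t.orderIsoOfFin htc with hσ
  refine ⟨⟨Sum.elim (va hn) (fun y => vb hn ((σ y : Fin 6))), ?_⟩, ?_⟩
  · rintro (x | y) (x' | y') h
    · simp at h
    · have hi := htJ (σ y').2
      rw [Finset.mem_filter] at hi
      simp only [Sum.elim_inl, Sum.elim_inr, SimpleGraph.inf_adj]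
      exact ⟨member_adj hn d T x _ hi.2.1, member_adj hn d' T' x _ hi.2.2⟩
    · have hi := htJ (σ y).2
      rw [Finset.mem_filter] at hi
      simp only [Sum.elim_inl, Sum.elim_inr, SimpleGraph.inf_adj]
      exact ⟨(member_adj hn d T x' _ hi.2.1).symm, (member_adj hn d' T' x' _ hi.2.2).symm⟩
    · simp at h
  · rintro (x | y) (x' | y') h
    · exact congrArg Sum.inl (va_inj hn h)
    · exact absurd h (va_ne_vb hn x _)
    · exact absurd (Eq.symm h) (va_ne_vb hn x' _)
    · have h2 : (σ y : Fin 6) = (σ y' : Fin 6) := vb_inj hn h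
      exact congrArg Sum.inr (σ.injective (Subtype.ext h2))

lemma famMap_injOn (hn : 8 ≤ n) :
    Set.InjOn (famMap hn)
      ↑((Finset.univ : Finset Dt) ×ˢ (R hn).powerset) := by
  have hrec : ∀ (dd : Dt), ∀ T'' ⊆ R hn,
      (baseEdges hn dd ∪ T'') ∩ P hn = baseEdges hn dd := by
    intro dd T'' hT''
    have hdisj : T'' ∩ P hn = ∅ := by
      apply Finset.eq_empty_of_forall_notMem
      intro e he
      rw [Finset.mem_inter] at he
      exact (Finset.mem_sdiff.1 (hT'' he.1)).2 he.2
    rw [Finset.union_inter_distrib_right, hdisj, Finset.union_empty,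
      Finset.inter_eq_left.2 (baseEdges_subset_P hn dd)]
  have hkey : ∀ (dd : Dt), ∀ T'' ⊆ R hn,
      (baseEdges hn dd ∪ T'') \ P hn = T'' := by
    intro dd T'' hT''
    rw [Finset.union_sdiff_distrib,
      Finset.sdiff_eq_self_of_disjoint
        (Finset.disjoint_left.2 fun e he hP => (Finset.mem_sdiff.1 (hT'' he)).2 hP),
      Finset.sdiff_eq_empty_iff_subset.2 (baseEdges_subset_P hn dd),
      Finset.empty_union]
  rintro ⟨d, T⟩ hq ⟨d', T'⟩ hq' hFF
  simp only [Finset.coe_product, Set.mem_prod, Finset.mem_coe,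
    Finset.mem_powerset] at hq hq'
  have hE := congrArg SimpleGraph.edgeSet hFF
  rw [famMap, famMap, edgeSet_member hn d hq.2, edgeSet_member hn d' hq'.2] at hE
  have hU : baseEdges hn d ∪ T = baseEdges hn d' ∪ T' := Finset.coe_injective hE
  have hB : baseEdges hn d = baseEdges hn d' := by
    rw [← hrec d T hq.2, ← hrec d' T' hq'.2, hU]
  have hT : T = T' := by rw [← hkey d T hq.2, ← hkey d' T' hq'.2, hU]
  rw [baseEdges_inj hn hB, hT]

end K24aux

/-- For every `n ≥ 8` there is a `K_{2,4}`-intersecting family of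
subgraphs of `K_n` of size at least `19 · 2^(C(n,2) − 12)`, and this quantity exceeds
the trivial bound `2^(C(n,2) − 8)`. -/
theorem K24_bound (n : ℕ) (hn : 8 ≤ n) :
    (∃ 𝓕 : Finset (SimpleGraph (Fin n)),
      IsIntersectingFamily (completeBipartiteGraph (Fin 2) (Fin 4)) 𝓕 ∧
      19 * 2 ^ (n.choose 2 - 12) ≤ 𝓕.card) ∧
    19 * 2 ^ (n.choose 2 - 12) > 2 ^ (n.choose 2 - 8) := by
  classical
  constructor
  · refine ⟨((Finset.univ : Finset K24aux.Dt) ×ˢ (K24aux.R hn).powerset).image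
      (K24aux.famMap hn), ?_, ?_⟩
    · intro F₁ h1 F₂ h2
      obtain ⟨⟨d, T⟩, hq, rfl⟩ := Finset.mem_image.1 h1
      obtain ⟨⟨d', T'⟩, hq', rfl⟩ := Finset.mem_image.1 h2
      exact K24aux.member_contains hn d d' T T'
    · rw [Finset.card_image_of_injOn (K24aux.famMap_injOn hn), Finset.card_product,
        Finset.card_univ, K24aux.card_Dt, Finset.card_powerset, K24aux.card_R hn]
  · have hm : 28 ≤ n.choose 2 := by
      calc 28 = Nat.choose 8 2 := by norm_num [Nat.choose]
      _ ≤ n.choose 2 := Nat.choose_le_choose 2 hn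
    have h12 : n.choose 2 - 8 = (n.choose 2 - 12) + 4 := by omega
    rw [h12, pow_add]
    have hX : 0 < 2 ^ (n.choose 2 - 12) := Nat.pow_pos (by norm_num)
    nlinarith
end

section
/- For every integer n ≥ 13 there exists a K_{3,8}-intersecting family 𝓕 of subgraphs of K_n with |𝓕| ≥ 71 · 2^{C(n,2) − 30}; note 71 · 2^{C(n,2) − 30} > 2^{C(n,2) − 24}, the trivial bound for K_{3,8}. -/
set_option maxRecDepth 8000


open SimpleGraph

namespace K38Aux

open Finset

variable (n : ℕ) (hn : 13 ≤ n)
include hn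

/-- Left vertices. -/
def vL (i : Fin 3) : Fin n := ⟨i.val, by have := i.isLt; omega⟩

/-- Right (column) vertices. -/
def vR (j : Fin 10) : Fin n := ⟨3 + j.val, by have := j.isLt; omega⟩

lemma vL_ne_vR (i : Fin 3) (j : Fin 10) : vL n hn i ≠ vR n hn j := by
  have hi := i.isLt
  simp only [vL, vR, Fin.mk.injEq, ne_eq]
  omega

lemma vL_inj : Function.Injective (vL n hn) := by
  intro a b h
  simpa [vL, Fin.ext_iff] using h

lemma vR_inj : Function.Injective (vR n hn) := by
  intro a b h
  simp only [vR, Fin.mk.injEq] at h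
  exact Fin.ext (by omega)

/-- The edge between left vertex `i` and column `j`. -/
def edgeOf (x : Fin 3 × Fin 10) : Sym2 (Fin n) := s(vL n hn x.1, vR n hn x.2)

lemma edgeOf_inj : Function.Injective (edgeOf n hn) := by
  rintro ⟨i, j⟩ ⟨i', j'⟩ h
  simp only [edgeOf, Sym2.eq, Sym2.rel_iff', Prod.mk.injEq, Prod.swap_prod_mk] at h
  rcases h with ⟨h1, h2⟩ | ⟨h1, h2⟩
  · exact Prod.ext (vL_inj n hn h1) (vR_inj n hn h2)
  · exact absurd h1 (vL_ne_vR n hn i j')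

lemma edgeOf_not_diag (x : Fin 3 × Fin 10) : ¬ (edgeOf n hn x).IsDiag :=
  by simpa [edgeOf] using vL_ne_vR n hn x.1 x.2

/-- All 30 pattern edges. -/
def patEdges : Finset (Sym2 (Fin n)) := Finset.univ.image (edgeOf n hn)

lemma card_patEdges : (patEdges n hn).card = 30 := by
  rw [patEdges, Finset.card_image_of_injective _ (edgeOf_inj n hn)]
  simp

/-- The edges realizing a pattern `p`. -/
def Ppat (p : Fin 10 → Finset (Fin 3)) : Finset (Sym2 (Fin n)) :=
  (Finset.univ.filter fun x : Fin 3 × Fin 10 => x.1 ∈ p x.2).image (edgeOf n hn)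

lemma Ppat_subset (p : Fin 10 → Finset (Fin 3)) : Ppat n hn p ⊆ patEdges n hn := by
  intro e he
  simp only [Ppat, mem_image, mem_filter] at he
  obtain ⟨x, _, hx⟩ := he
  exact Finset.mem_image.mpr ⟨x, mem_univ _, hx⟩

lemma mem_Ppat (p : Fin 10 → Finset (Fin 3)) (x : Fin 3 × Fin 10) :
    edgeOf n hn x ∈ Ppat n hn p ↔ x.1 ∈ p x.2 := by
  constructor
  · intro h
    simp only [Ppat, mem_image, mem_filter] at h
    obtain ⟨y, ⟨_, hy⟩, hxy⟩ := h
    rwa [← edgeOf_inj n hn hxy]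
  · intro h
    exact Finset.mem_image.mpr ⟨x, by simpa using h, rfl⟩

lemma Ppat_inj : Function.Injective (Ppat n hn) := by
  intro p q h
  funext j
  ext i
  rw [← mem_Ppat n hn p (i, j), h, mem_Ppat]

/-- Non-pattern, non-diagonal pairs. -/
def rest : Finset (Sym2 (Fin n)) :=
  Finset.univ.filter fun e => ¬ e.IsDiag ∧ e ∉ patEdges n hn

lemma card_rest : (rest n hn).card = n.choose 2 - 30 := by
  have hsub : patEdges n hn ⊆ Finset.univ.filter fun e : Sym2 (Fin n) => ¬ e.IsDiag := by
    intro e he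
    obtain ⟨x, _, hx⟩ := Finset.mem_image.mp he
    exact mem_filter.mpr ⟨mem_univ _, hx ▸ edgeOf_not_diag n hn x⟩
  have hrest : rest n hn = (Finset.univ.filter fun e : Sym2 (Fin n) => ¬ e.IsDiag) \ patEdges n hn := by
    ext e
    simp [rest, Finset.mem_sdiff, and_assoc]
  have hcard : (Finset.univ.filter fun e : Sym2 (Fin n) => ¬ e.IsDiag).card = n.choose 2 := by
    rw [← Fintype.card_subtype, Sym2.card_subtype_not_diag, Fintype.card_fin]
  rw [hrest, Finset.card_sdiff_of_subset hsub, hcard, card_patEdges]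

/-- Parametrization of admissible patterns: `none` means all 10 columns full,
`some (j, s)` means all columns full except column `j` which has state `s ≠ univ`. -/
abbrev T := Option (Fin 10 × {s : Finset (Fin 3) // s ≠ Finset.univ})

/-- The pattern corresponding to an element of `T`. -/
def ptn (o : T) : Fin 10 → Finset (Fin 3) :=
  fun j => match o with
  | none => Finset.univ
  | some (j0, s) => if j = j0 then s.1 else Finset.univ

omit hn in lemma ptn_inj : Function.Injective ptn := by
  rintro (_ | ⟨j, s⟩) (_ | ⟨j', s'⟩) h
  · rfl
  · exact absurd (congrFun h j').symm (by simp [ptn, s'.2])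
  · exact absurd (congrFun h j) (by simp [ptn, s.2])
  · have hj : j = j' := by
      by_contra hne
      have h1 := congrFun h j
      simp only [ptn, if_pos rfl, if_neg hne] at h1
      exact s.2 h1
    subst hj
    have h1 := congrFun h j
    simp only [ptn, if_pos rfl] at h1
    exact congrArg some (Prod.ext rfl (Subtype.ext h1))

/-- Bad columns of an element of `T`. -/
def bad (o : T) : Finset (Fin 10) :=
  match o with
  | none => ∅
  | some (j, _) => {j}

omit hn in lemma card_bad (o : T) : (bad o).card ≤ 1 := by
  rcases o with _ | ⟨j, s⟩ <;> simp [bad]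

omit hn in lemma ptn_of_not_bad (o : T) (j : Fin 10) (h : j ∉ bad o) : ptn o j = Finset.univ := by
  rcases o with _ | ⟨j0, s⟩
  · rfl
  · simp only [bad, mem_singleton] at h
    simp [ptn, h]

/-- The graph built from a pattern parameter and a free edge set. -/
def F (o : T) (S : Finset (Sym2 (Fin n))) : SimpleGraph (Fin n) :=
  fromEdgeSet ↑(S ∪ Ppat n hn (ptn o))

lemma F_edgeSet (o : T) (S : Finset (Sym2 (Fin n))) (hS : S ⊆ rest n hn) :
    (F n hn o S).edgeSet = ↑(S ∪ Ppat n hn (ptn o)) := by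
  rw [F, edgeSet_fromEdgeSet]
  refine sdiff_eq_left.mpr ?_
  rw [Set.disjoint_left]
  rintro e he hd
  replace hd : e.IsDiag := by simpa using hd
  rw [Finset.mem_coe] at he
  rcases Finset.mem_union.mp he with h | h
  · exact ((mem_filter.mp (hS h)).2).1 hd
  · obtain ⟨x, _, hx⟩ := Finset.mem_image.mp h
    exact edgeOf_not_diag n hn x (hx ▸ hd)

lemma F_adj (o : T) (S : Finset (Sym2 (Fin n))) (i : Fin 3) (j : Fin 10)
    (h : i ∈ ptn o j) : (F n hn o S).Adj (vL n hn i) (vR n hn j) := by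
  rw [F, fromEdgeSet_adj]
  refine ⟨?_, vL_ne_vR n hn i j⟩
  exact_mod_cast Finset.mem_union_right _ ((mem_Ppat n hn _ (i, j)).mpr h)

/-- The family. -/
noncomputable def Fam : Finset (SimpleGraph (Fin n)) :=
  letI := Classical.decEq (SimpleGraph (Fin n))
  ((Finset.univ : Finset T) ×ˢ (rest n hn).powerset).image fun q => F n hn q.1 q.2

lemma F_injOn : Set.InjOn (fun q : T × Finset (Sym2 (Fin n)) => F n hn q.1 q.2)
    ((((Finset.univ : Finset T) ×ˢ (rest n hn).powerset) : Finset _) : Set _) := by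
  rintro ⟨o, S⟩ hq ⟨o', S'⟩ hq' h
  simp only [Finset.coe_product, Set.mem_prod, Finset.mem_coe, Finset.mem_powerset] at hq hq'
  have hS : S ⊆ rest n hn := hq.2
  have hS' : S' ⊆ rest n hn := hq'.2
  have he : S ∪ Ppat n hn (ptn o) = S' ∪ Ppat n hn (ptn o') := by
    apply Finset.coe_injective
    rw [← F_edgeSet n hn o S hS, ← F_edgeSet n hn o' S' hS']
    exact congrArg SimpleGraph.edgeSet h
  -- split via disjointness with patEdges
  have key : ∀ (A B : Finset (Sym2 (Fin n))), A ⊆ rest n hn →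
      (A ∪ B) ∩ patEdges n hn = B ∩ patEdges n hn ∨ True := fun _ _ _ => Or.inr trivial
  have hSr : ∀ e ∈ S, e ∉ patEdges n hn := fun e hh => ((mem_filter.mp (hS hh)).2).2
  have hS'r : ∀ e ∈ S', e ∉ patEdges n hn := fun e hh => ((mem_filter.mp (hS' hh)).2).2
  have hPp : Ppat n hn (ptn o) = Ppat n hn (ptn o') := by
    ext e
    constructor
    · intro hmem
      have hp := Ppat_subset n hn (ptn o) hmem
      have : e ∈ S' ∪ Ppat n hn (ptn o') := he ▸ Finset.mem_union_right _ hmem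
      rcases Finset.mem_union.mp this with h' | h'
      · exact absurd hp (hS'r e h')
      · exact h'
    · intro hmem
      have hp := Ppat_subset n hn (ptn o') hmem
      have : e ∈ S ∪ Ppat n hn (ptn o) := he.symm ▸ Finset.mem_union_right _ hmem
      rcases Finset.mem_union.mp this with h' | h'
      · exact absurd hp (hSr e h')
      · exact h'
  have ho : o = o' := ptn_inj (Ppat_inj n hn hPp)
  subst ho
  have hSS : S = S' := by
    ext e
    constructor
    · intro hmem
      have : e ∈ S' ∪ Ppat n hn (ptn o) := he ▸ Finset.mem_union_left _ hmem
      rcases Finset.mem_union.mp this with h' | h'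
      · exact h'
      · exact absurd (Ppat_subset n hn _ h') (hSr e hmem)
    · intro hmem
      have : e ∈ S ∪ Ppat n hn (ptn o) := he.symm ▸ Finset.mem_union_left _ hmem
      rcases Finset.mem_union.mp this with h' | h'
      · exact h'
      · exact absurd (Ppat_subset n hn _ h') (hS'r e hmem)
  simp [hSS]

omit hn in lemma card_T : Fintype.card T = 71 := by
  rw [Fintype.card_option, Fintype.card_prod, Fintype.card_fin]
  have : Fintype.card {s : Finset (Fin 3) // s ≠ Finset.univ} = 7 := by decide
  rw [this]

lemma card_Fam : (Fam n hn).card = 71 * 2 ^ (n.choose 2 - 30) := by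
  classical
  rw [Fam]
  rw [Finset.card_image_of_injOn (F_injOn n hn), Finset.card_product,
    Finset.card_powerset, card_rest, Finset.card_univ, card_T]

lemma Fam_intersecting :
    IsIntersectingFamily (completeBipartiteGraph (Fin 3) (Fin 8)) (Fam n hn) := by
  intro F₁ h₁ F₂ h₂
  simp only [Fam, Finset.mem_image, Finset.mem_product, Finset.mem_powerset] at h₁ h₂
  obtain ⟨⟨o₁, S₁⟩, ⟨-, hS₁⟩, rfl⟩ := h₁
  obtain ⟨⟨o₂, S₂⟩, ⟨-, hS₂⟩, rfl⟩ := h₂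
  -- choose 8 good columns
  have hcard : 8 ≤ ((Finset.univ : Finset (Fin 10)) \ (bad o₁ ∪ bad o₂)).card := by
    have h1 : (bad o₁ ∪ bad o₂).card ≤ 2 := by
      calc (bad o₁ ∪ bad o₂).card ≤ (bad o₁).card + (bad o₂).card := Finset.card_union_le _ _
      _ ≤ 2 := by have := card_bad o₁; have := card_bad o₂; omega
    have h2 := Finset.le_card_sdiff (bad o₁ ∪ bad o₂) (Finset.univ : Finset (Fin 10))
    simp only [Finset.card_univ, Fintype.card_fin] at h2 ⊢
    omega
  obtain ⟨t, ht, htc⟩ := Finset.exists_subset_card_eq hcard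
  -- the embedding Fin 8 → Fin 10 into good columns
  let e : Fin 8 → t := fun k => t.equivFin.symm (Fin.cast htc.symm k)
  have hgood : ∀ (v : T) (k : Fin 8), v = o₁ ∨ v = o₂ → ptn v (e k) = Finset.univ := by
    intro v k hv
    have hmem : ((e k : Fin 10)) ∈ Finset.univ \ (bad o₁ ∪ bad o₂) := ht (e k).2
    have := (Finset.mem_sdiff.mp hmem).2
    rcases hv with rfl | rfl
    · exact ptn_of_not_bad v _ (fun hb => this (Finset.mem_union_left _ hb))
    · exact ptn_of_not_bad v _ (fun hb => this (Finset.mem_union_right _ hb))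
  refine ⟨⟨Sum.elim (vL n hn) (fun k => vR n hn (e k)), ?_⟩, ?_⟩
  · rintro (i | k) (i' | k') hadj <;>
      simp only [completeBipartiteGraph_adj, Sum.isLeft_inl, Sum.isRight_inr,
        Sum.isRight_inl, Sum.isLeft_inr, and_true, true_and, and_false, false_and,
        or_false, false_or] at hadj
    · exact absurd hadj (by simp)
    · simp only [Sum.elim_inl, Sum.elim_inr, inf_adj]
      constructor
      · exact F_adj n hn o₁ S₁ i (e k') (by rw [hgood o₁ k' (Or.inl rfl)]; exact Finset.mem_univ _)
      · exact F_adj n hn o₂ S₂ i (e k') (by rw [hgood o₂ k' (Or.inr rfl)]; exact Finset.mem_univ _)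
    · simp only [Sum.elim_inl, Sum.elim_inr, inf_adj]
      constructor
      · exact (F_adj n hn o₁ S₁ i' (e k) (by rw [hgood o₁ k (Or.inl rfl)]; exact Finset.mem_univ _)).symm
      · exact (F_adj n hn o₂ S₂ i' (e k) (by rw [hgood o₂ k (Or.inr rfl)]; exact Finset.mem_univ _)).symm
    · exact absurd hadj (by simp)
  · rintro (i | k) (i' | k') h
    · simp only [Sum.elim_inl] at h
      exact congrArg Sum.inl (vL_inj n hn h)
    · exact absurd h (by simpa using vL_ne_vR n hn i (e k'))
    · exact absurd h.symm (by simpa using vL_ne_vR n hn i' (e k))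
    · simp only [Sum.elim_inr] at h
      have : e k = e k' := Subtype.ext (vR_inj n hn h)
      have : Fin.cast htc.symm k = Fin.cast htc.symm k' := t.equivFin.symm.injective this
      exact congrArg Sum.inr (by simpa [Fin.ext_iff] using this)

end K38Aux

/-- For every `n ≥ 13` there is a `K_{3,8}`-intersecting family of
subgraphs of `K_n` of size at least `71 · 2^(C(n,2) − 30)`, and this quantity exceeds
the trivial bound `2^(C(n,2) − 24)`. -/
theorem K38_bound (n : ℕ) (hn : 13 ≤ n) :
    (∃ 𝓕 : Finset (SimpleGraph (Fin n)),
      IsIntersectingFamily (completeBipartiteGraph (Fin 3) (Fin 8)) 𝓕 ∧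
      71 * 2 ^ (n.choose 2 - 30) ≤ 𝓕.card) ∧
    71 * 2 ^ (n.choose 2 - 30) > 2 ^ (n.choose 2 - 24) := by
  have hc : 78 ≤ n.choose 2 := by
    calc (78 : ℕ) = Nat.choose 13 2 := by decide
    _ ≤ n.choose 2 := Nat.choose_le_choose 2 hn
  constructor
  · exact ⟨K38Aux.Fam n hn, K38Aux.Fam_intersecting n hn, (K38Aux.card_Fam n hn).ge⟩
  · have h1 : n.choose 2 - 24 = (n.choose 2 - 30) + 6 := by omega
    rw [h1, pow_add]
    have hpos : 0 < 2 ^ (n.choose 2 - 30) := by positivity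
    calc 2 ^ (n.choose 2 - 30) * 2 ^ 6 = 64 * 2 ^ (n.choose 2 - 30) := by ring
    _ < 71 * 2 ^ (n.choose 2 - 30) := by
        exact Nat.mul_lt_mul_of_lt_of_le (by norm_num) le_rfl hpos
end

section
/- For every integer n ≥ 22 there exists a K_{4,16}-intersecting family 𝓕 of subgraphs of K_n with |𝓕| ≥ 271 · 2^{C(n,2) − 72}; note 271 · 2^{C(n,2) − 72} > 2^{C(n,2) − 64}, the trivial bound for K_{4,16}. -/
set_option maxRecDepth 8000


open SimpleGraph

namespace K416Aux

variable {n : ℕ}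

/-- The four "left" vertices. -/
def u (hn : 22 ≤ n) (i : Fin 4) : Fin n := ⟨i.val, by have := i.isLt; omega⟩

/-- The eighteen "right" vertices. -/
def v (hn : 22 ≤ n) (j : Fin 18) : Fin n := ⟨4 + j.val, by have := j.isLt; omega⟩

lemma u_inj (hn : 22 ≤ n) : Function.Injective (u hn) := by
  intro i i' h
  have := congrArg Fin.val h
  simp only [u] at this
  exact Fin.ext this

lemma v_inj (hn : 22 ≤ n) : Function.Injective (v hn) := by
  intro j j' h
  have := congrArg Fin.val h
  simp only [v] at this
  exact Fin.ext (by omega)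

lemma u_ne_v (hn : 22 ≤ n) (i : Fin 4) (j : Fin 18) : u hn i ≠ v hn j := by
  intro h
  have := congrArg Fin.val h
  simp only [u, v] at this
  have := i.isLt
  omega

/-- The edge slot corresponding to a cell of the `4 × 18` grid. -/
def cell (hn : 22 ≤ n) (p : Fin 4 × Fin 18) : Sym2 (Fin n) := s(u hn p.1, v hn p.2)

lemma cell_inj (hn : 22 ≤ n) : Function.Injective (cell hn) := by
  rintro ⟨i, j⟩ ⟨i', j'⟩ h
  rw [cell, cell, Sym2.eq_iff] at h
  have key : (i : ℕ) = i' ∧ (j : ℕ) = j' := by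
    have hi := i.isLt; have hi' := i'.isLt
    rcases h with ⟨h1, h2⟩ | ⟨h1, h2⟩ <;>
    · have e1 := congrArg Fin.val h1
      have e2 := congrArg Fin.val h2
      simp only [u, v] at e1 e2
      omega
  have : i = i' := Fin.ext key.1
  have : j = j' := Fin.ext key.2
  simp_all

/-- The 72 fixed edge slots. -/
def slots (hn : 22 ≤ n) : Finset (Sym2 (Fin n)) := Finset.image (cell hn) Finset.univ

lemma card_slots (hn : 22 ≤ n) : (slots hn).card = 72 := by
  rw [slots, Finset.card_image_of_injective _ (cell_inj hn), Finset.card_univ]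
  simp

lemma cell_mem_slots (hn : 22 ≤ n) (p : Fin 4 × Fin 18) : cell hn p ∈ slots hn :=
  Finset.mem_image_of_mem _ (Finset.mem_univ p)

lemma slots_subset (hn : 22 ≤ n) :
    slots hn ⊆ (⊤ : SimpleGraph (Fin n)).edgeFinset := by
  intro e he
  rw [slots, Finset.mem_image] at he
  obtain ⟨p, -, rfl⟩ := he
  have : s(u hn p.1, v hn p.2) ∈ (⊤ : SimpleGraph (Fin n)).edgeSet :=
    (SimpleGraph.mem_edgeSet _).mpr ((SimpleGraph.top_adj _ _).mpr (u_ne_v hn p.1 p.2))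
  exact SimpleGraph.mem_edgeFinset.mpr this

lemma nondiag_of_mem_top {e : Sym2 (Fin n)}
    (he : e ∈ (⊤ : SimpleGraph (Fin n)).edgeFinset) : ¬ e.IsDiag :=
  (⊤ : SimpleGraph (Fin n)).not_isDiag_of_mem_edgeSet (SimpleGraph.mem_edgeFinset.mp he)

/-- Index type for the 271 patterns: either "full" or "remove the nonempty set `t`
of cells in column `j`". -/
abbrev Idx := Option (Fin 18 × {t : Finset (Fin 4) // t.Nonempty})

lemma card_Idx : Fintype.card Idx = 271 := by
  rw [Fintype.card_option, Fintype.card_prod, Fintype.card_fin]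
  have h : Fintype.card {t : Finset (Fin 4) // t.Nonempty} = 15 := by decide
  rw [h]

/-- The (at most one) bad column of a pattern. -/
def badcol : Idx → Finset (Fin 18)
  | none => ∅
  | some (j, _) => {j}

lemma card_badcol (a : Idx) : (badcol a).card ≤ 1 := by
  rcases a with _ | ⟨j, t⟩ <;> simp [badcol]

/-- The pattern of slot edges indexed by `a`. -/
def pat (hn : 22 ≤ n) : Idx → Finset (Sym2 (Fin n))
  | none => slots hn
  | some (j, t) => slots hn \ (t.1.image fun i => cell hn (i, j))

lemma pat_subset (hn : 22 ≤ n) (a : Idx) : pat hn a ⊆ slots hn := by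
  rcases a with _ | ⟨j, t⟩
  · exact Finset.Subset.refl _
  · exact Finset.sdiff_subset

lemma cell_mem_image_iff (hn : 22 ≤ n) (p : Fin 4 × Fin 18) (j : Fin 18)
    (t : Finset (Fin 4)) :
    cell hn p ∈ t.image (fun i => cell hn (i, j)) ↔ p.1 ∈ t ∧ p.2 = j := by
  obtain ⟨p1, p2⟩ := p
  rw [Finset.mem_image]
  constructor
  · rintro ⟨i, hi, h⟩
    have h2 := cell_inj hn h
    rw [Prod.mk.injEq] at h2
    obtain ⟨rfl, rfl⟩ := h2
    exact ⟨hi, rfl⟩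
  · rintro ⟨h1, rfl⟩
    exact ⟨p1, h1, rfl⟩

lemma cell_mem_pat_some_iff (hn : 22 ≤ n) (p : Fin 4 × Fin 18) (j : Fin 18)
    (t : {t : Finset (Fin 4) // t.Nonempty}) :
    cell hn p ∈ pat hn (some (j, t)) ↔ ¬(p.1 ∈ t.1 ∧ p.2 = j) := by
  rw [pat, Finset.mem_sdiff, cell_mem_image_iff]
  simp [cell_mem_slots hn p]

lemma cell_mem_pat (hn : 22 ≤ n) (a : Idx) (p : Fin 4 × Fin 18)
    (hp : p.2 ∉ badcol a) : cell hn p ∈ pat hn a := by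
  rcases a with _ | ⟨j, t⟩
  · exact cell_mem_slots hn p
  · rw [cell_mem_pat_some_iff]
    rintro ⟨-, h2⟩
    exact hp (by simp [badcol, h2])

lemma pat_inj (hn : 22 ≤ n) : Function.Injective (pat hn) := by
  intro a b h
  match a, b with
  | none, none => rfl
  | none, some (j, t) =>
      obtain ⟨i, hi⟩ := t.2
      have h1 : cell hn (i, j) ∈ pat hn (some (j, t)) := by
        rw [← h]; exact cell_mem_slots hn _
      rw [cell_mem_pat_some_iff] at h1
      exact absurd ⟨hi, rfl⟩ h1
  | some (j, t), none =>
      obtain ⟨i, hi⟩ := t.2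
      have h1 : cell hn (i, j) ∈ pat hn (some (j, t)) := by
        rw [h]; exact cell_mem_slots hn _
      rw [cell_mem_pat_some_iff] at h1
      exact absurd ⟨hi, rfl⟩ h1
  | some (j, t), some (j', t') =>
      obtain ⟨i, hi⟩ := t.2
      have h1 : cell hn (i, j) ∉ pat hn (some (j, t)) := by
        rw [cell_mem_pat_some_iff]
        simp [hi]
      rw [h, cell_mem_pat_some_iff, not_not] at h1
      obtain ⟨hit', hjj'⟩ := h1
      subst hjj'
      have ht : t = t' := by
        apply Subtype.ext
        ext i'
        have hmem : cell hn (i', j) ∈ pat hn (some (j, t)) ↔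
            cell hn (i', j) ∈ pat hn (some (j, t')) := by rw [h]
        rw [cell_mem_pat_some_iff, cell_mem_pat_some_iff] at hmem
        simp only [and_true] at hmem
        exact not_iff_not.mp hmem
      rw [ht]

/-- The remaining free edge slots. -/
def free (hn : 22 ≤ n) : Finset (Sym2 (Fin n)) :=
  (⊤ : SimpleGraph (Fin n)).edgeFinset \ slots hn

lemma card_free (hn : 22 ≤ n) : (free hn).card = n.choose 2 - 72 := by
  rw [free, Finset.card_sdiff_of_subset (slots_subset hn), card_slots,
    SimpleGraph.card_edgeFinset_top_eq_card_choose_two, Fintype.card_fin]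

/-- The graph built from a pattern together with a set of free edges. -/
def Φ (hn : 22 ≤ n) (q : Idx × Finset (Sym2 (Fin n))) : SimpleGraph (Fin n) :=
  SimpleGraph.fromEdgeSet ↑(pat hn q.1 ∪ q.2)

lemma edgeSet_Φ (hn : 22 ≤ n) (q : Idx × Finset (Sym2 (Fin n)))
    (hq : q.2 ⊆ free hn) : (Φ hn q).edgeSet = ↑(pat hn q.1 ∪ q.2) := by
  rw [Φ, SimpleGraph.edgeSet_fromEdgeSet]
  ext e
  simp only [Set.mem_diff, Finset.coe_union, Set.mem_union, Finset.mem_coe,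
    Set.mem_setOf_eq]
  refine ⟨fun h => h.1, fun h => ⟨h, ?_⟩⟩
  rcases h with h | h
  · exact nondiag_of_mem_top (slots_subset hn (pat_subset hn q.1 h))
  · exact nondiag_of_mem_top (Finset.mem_sdiff.mp (hq h)).1

lemma disj_free_slots (hn : 22 ≤ n) {R : Finset (Sym2 (Fin n))}
    (hR : R ⊆ free hn) : Disjoint R (slots hn) :=
  Finset.sdiff_disjoint.mono_left hR

lemma Φ_injOn (hn : 22 ≤ n) :
    Set.InjOn (Φ hn)
      ↑((Finset.univ : Finset Idx) ×ˢ (free hn).powerset) := by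
  rintro ⟨a, R⟩ hq ⟨a', R'⟩ hq' h
  simp only [Finset.coe_product, Set.mem_prod, Finset.mem_coe,
    Finset.mem_powerset, Finset.mem_univ, true_and] at hq hq'
  have he : (pat hn a ∪ R : Finset (Sym2 (Fin n))) = pat hn a' ∪ R' := by
    have h2 := congrArg SimpleGraph.edgeSet h
    rw [edgeSet_Φ hn (a, R) hq, edgeSet_Φ hn (a', R') hq'] at h2
    exact Finset.coe_injective h2
  have key : ∀ (b : Idx) (S : Finset (Sym2 (Fin n))), S ⊆ free hn →
      (pat hn b ∪ S) ∩ slots hn = pat hn b := by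
    intro b S hS
    rw [Finset.union_inter_distrib_right,
      Finset.inter_eq_left.mpr (pat_subset hn b),
      Finset.disjoint_iff_inter_eq_empty.mp (disj_free_slots hn hS),
      Finset.union_empty]
  have key2 : ∀ (b : Idx) (S : Finset (Sym2 (Fin n))), S ⊆ free hn →
      (pat hn b ∪ S) \ slots hn = S := by
    intro b S hS
    rw [Finset.union_sdiff_distrib,
      Finset.sdiff_eq_empty_iff_subset.mpr (pat_subset hn b),
      Finset.empty_union,
      Finset.sdiff_eq_self_of_disjoint (disj_free_slots hn hS)]
  have hpat : pat hn a = pat hn a' := by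
    rw [← key a R hq, ← key a' R' hq', he]
  have hRR : R = R' := by
    rw [← key2 a R hq, ← key2 a' R' hq', he]
  rw [Prod.mk.injEq]
  exact ⟨pat_inj hn hpat, hRR⟩

lemma Φ_adj (hn : 22 ≤ n) (a : Idx) (R : Finset (Sym2 (Fin n)))
    (i : Fin 4) (j : Fin 18) (hj : j ∉ badcol a) :
    (Φ hn (a, R)).Adj (u hn i) (v hn j) := by
  rw [Φ, SimpleGraph.fromEdgeSet_adj]
  refine ⟨?_, u_ne_v hn i j⟩
  have hmem : cell hn (i, j) ∈ pat hn a := cell_mem_pat hn a (i, j) hj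
  exact Finset.mem_coe.mpr (Finset.mem_union_left _ hmem)

lemma inter_contains (hn : 22 ≤ n) (a a' : Idx) (R R' : Finset (Sym2 (Fin n))) :
    ContainsCopy (completeBipartiteGraph (Fin 4) (Fin 16))
      (Φ hn (a, R) ⊓ Φ hn (a', R')) := by
  classical
  set B : Finset (Fin 18) := badcol a ∪ badcol a' with hBdef
  have hB : B.card ≤ 2 := by
    have h1 := Finset.card_union_le (badcol a) (badcol a')
    rw [← hBdef] at h1
    have h2 := card_badcol a
    have h3 := card_badcol a'
    omega
  have hcompl : 16 ≤ Bᶜ.card := by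
    rw [Finset.card_compl, Fintype.card_fin]
    omega
  obtain ⟨g, hg, hgcard⟩ := Finset.exists_subset_card_eq hcompl
  set σ : Fin 16 → Fin 18 := fun k => (g.orderIsoOfFin hgcard k : Fin 18) with hσdef
  have hσinj : Function.Injective σ := fun k k' hkk' =>
    (g.orderIsoOfFin hgcard).injective (Subtype.ext hkk')
  have hσmem : ∀ k, σ k ∉ B := by
    intro k hmem
    have hin : σ k ∈ g := (g.orderIsoOfFin hgcard k).2
    exact (Finset.mem_compl.mp (hg hin)) hmem
  have hσa : ∀ k, σ k ∉ badcol a := fun k h =>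
    hσmem k (Finset.mem_union_left _ h)
  have hσa' : ∀ k, σ k ∉ badcol a' := fun k h =>
    hσmem k (Finset.mem_union_right _ h)
  have hf : Function.Injective
      (Sum.elim (u hn) (fun k => v hn (σ k)) : Fin 4 ⊕ Fin 16 → Fin n) := by
    rintro (i | k) (i' | k') h <;>
      simp only [Sum.elim_inl, Sum.elim_inr] at h
    · rw [u_inj hn h]
    · exact absurd h (u_ne_v hn i (σ k'))
    · exact absurd h.symm (u_ne_v hn i' (σ k))
    · rw [hσinj (v_inj hn h)]
  refine ⟨⟨Sum.elim (u hn) (fun k => v hn (σ k)), ?_⟩, hf⟩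
  intro x y hadj
  rcases x with i | k <;> rcases y with i' | k'
  · simp at hadj
  · simp only [Sum.elim_inl, Sum.elim_inr]
    rw [SimpleGraph.inf_adj]
    exact ⟨Φ_adj hn a R i (σ k') (hσa _), Φ_adj hn a' R' i (σ k') (hσa' _)⟩
  · simp only [Sum.elim_inl, Sum.elim_inr]
    rw [SimpleGraph.inf_adj]
    exact ⟨(Φ_adj hn a R i' (σ k) (hσa _)).symm,
      (Φ_adj hn a' R' i' (σ k) (hσa' _)).symm⟩
  · simp at hadj

end K416Aux

open K416Aux in
/-- For every `n ≥ 22` there is a `K_{4,16}`-intersecting family of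
subgraphs of `K_n` of size at least `271 · 2^(C(n,2) − 72)`, and this quantity exceeds
the trivial bound `2^(C(n,2) − 64)`. -/
theorem K416_bound (n : ℕ) (hn : 22 ≤ n) :
    (∃ 𝓕 : Finset (SimpleGraph (Fin n)),
      IsIntersectingFamily (completeBipartiteGraph (Fin 4) (Fin 16)) 𝓕 ∧
      271 * 2 ^ (n.choose 2 - 72) ≤ 𝓕.card) ∧
    271 * 2 ^ (n.choose 2 - 72) > 2 ^ (n.choose 2 - 64) := by
  classical
  have h231 : 231 ≤ n.choose 2 := by
    have h1 : Nat.choose 22 2 = 231 := by decide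
    have h2 := Nat.choose_le_choose 2 hn
    omega
  constructor
  · refine ⟨(((Finset.univ : Finset Idx) ×ˢ (free hn).powerset).image (Φ hn)),
      ?_, ?_⟩
    · intro F₁ h1 F₂ h2
      rw [Finset.mem_image] at h1 h2
      obtain ⟨⟨a, R⟩, -, rfl⟩ := h1
      obtain ⟨⟨a', R'⟩, -, rfl⟩ := h2
      exact inter_contains hn a a' R R'
    · rw [Finset.card_image_of_injOn (Φ_injOn hn),
        Finset.card_product, Finset.card_powerset, card_free hn,
        Finset.card_univ, card_Idx]
  · have hsplit : n.choose 2 - 64 = (n.choose 2 - 72) + 8 := by omega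
    rw [hsplit, pow_add]
    have hx : 0 < 2 ^ (n.choose 2 - 72) := Nat.pow_pos (by norm_num)
    have h8 : (2 : ℕ) ^ 8 = 256 := by norm_num
    rw [h8]
    set x := 2 ^ (n.choose 2 - 72)
    omega
end

section
/- For every integer n ≥ 39 there exists a K_{5,32}-intersecting family 𝓕 of subgraphs of K_n with |𝓕| ≥ 1055 · 2^{C(n,2) − 170}; note 1055 · 2^{C(n,2) − 170} > 2^{C(n,2) − 160}, the trivial bound for K_{5,32}. -/
open SimpleGraph

open Finset

set_option linter.constructorNameAsVariable false

namespace K532Aux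

variable (n : ℕ) (hn : 39 ≤ n)

/-- Left vertices of the fixed `K_{5,34}`. -/
def Lv (i : Fin 5) : Fin n := ⟨i.val, by have := i.isLt; omega⟩

/-- Right vertices. -/
def Rv (j : Fin 34) : Fin n := ⟨5 + j.val, by have := j.isLt; omega⟩

lemma Lv_ne_Rv (i : Fin 5) (j : Fin 34) : Lv n hn i ≠ Rv n hn j := by
  simp only [Lv, Rv, Ne, Fin.mk.injEq]; omega

lemma Lv_inj : Function.Injective (Lv n hn) := by
  intro a b h; simp only [Lv, Fin.mk.injEq] at h; exact Fin.ext h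

lemma Rv_inj : Function.Injective (Rv n hn) := by
  intro a b h; simp only [Rv, Fin.mk.injEq] at h; exact Fin.ext (by omega)

lemma edge_eq_iff (i i' : Fin 5) (j j' : Fin 34) :
    s(Lv n hn i, Rv n hn j) = s(Lv n hn i', Rv n hn j') ↔ i = i' ∧ j = j' := by
  rw [Sym2.eq_iff]
  classical
  constructor
  · rintro (⟨h1, h2⟩ | ⟨h1, h2⟩)
    · exact ⟨Lv_inj n hn h1, Rv_inj n hn h2⟩
    · exact absurd h1 (Lv_ne_Rv n hn i j')
  · rintro ⟨rfl, rfl⟩; left; exact ⟨rfl, rfl⟩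

/-- Edges of the fixed `K_{5,34}`. -/
def S : Finset (Sym2 (Fin n)) :=
  (Finset.univ : Finset (Fin 5 × Fin 34)).image fun p => s(Lv n hn p.1, Rv n hn p.2)

lemma card_S : (S n hn).card = 170 := by
  rw [S, Finset.card_image_of_injective _ ?_]
  · simp
  · intro p q h
    rw [edge_eq_iff] at h
    exact Prod.ext h.1 h.2

lemma mem_S {x : Sym2 (Fin n)} : x ∈ S n hn ↔ ∃ i j, x = s(Lv n hn i, Rv n hn j) := by
  simp only [S, Finset.mem_image, Finset.mem_univ, true_and, Prod.exists]
  aesop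

/-- The star of edges at right vertex `v`. -/
def star (v : Fin 34) : Finset (Sym2 (Fin n)) :=
  (Finset.univ : Finset (Fin 5)).image fun i => s(Lv n hn i, Rv n hn v)

lemma mem_star {v : Fin 34} {x : Sym2 (Fin n)} :
    x ∈ star n hn v ↔ ∃ i, x = s(Lv n hn i, Rv n hn v) := by
  simp only [star, Finset.mem_image, Finset.mem_univ, true_and]
  aesop

lemma star_subset_S (v : Fin 34) : star n hn v ⊆ S n hn := by
  intro x hx
  rw [mem_star] at hx
  rw [mem_S]
  obtain ⟨i, rfl⟩ := hx
  exact ⟨i, v, rfl⟩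

lemma card_star (v : Fin 34) : (star n hn v).card = 5 := by
  rw [star, Finset.card_image_of_injective _ ?_]
  · simp
  · intro a b h
    rw [edge_eq_iff] at h
    exact h.1

lemma star_disjoint {v w : Fin 34} (hvw : v ≠ w) : Disjoint (star n hn v) (star n hn w) := by
  rw [Finset.disjoint_left]
  intro x hv hw
  rw [mem_star] at hv hw
  obtain ⟨i, rfl⟩ := hv
  obtain ⟨i', h⟩ := hw
  rw [edge_eq_iff] at h
  exact hvw h.2

/-- The allowed "missing" edge sets. -/
def M0 : Finset (Finset (Sym2 (Fin n))) :=
  insert ∅ (Finset.univ.biUnion fun v => ((star n hn v).powerset.erase ∅))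

lemma mem_M0 {M : Finset (Sym2 (Fin n))} (h : M ∈ M0 n hn) : ∃ v, M ⊆ star n hn v := by
  rw [M0, Finset.mem_insert] at h
  rcases h with rfl | h
  · exact ⟨0, Finset.empty_subset _⟩
  · simp only [Finset.mem_biUnion, Finset.mem_erase, Finset.mem_powerset] at h
    obtain ⟨v, _, _, hsub⟩ := h
    exact ⟨v, hsub⟩

lemma M0_subset_powerset_S {M : Finset (Sym2 (Fin n))} (h : M ∈ M0 n hn) : M ⊆ S n hn := by
  obtain ⟨v, hv⟩ := mem_M0 n hn h
  exact hv.trans (star_subset_S n hn v)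

lemma card_M0 : (M0 n hn).card = 1055 := by
  rw [M0, Finset.card_insert_of_notMem ?_, Finset.card_biUnion ?_]
  · have : ∀ v : Fin 34, ((star n hn v).powerset.erase ∅).card = 31 := by
      intro v
      rw [Finset.card_erase_of_mem (Finset.empty_mem_powerset _), Finset.card_powerset,
        card_star]
      norm_num
    rw [Finset.sum_congr rfl fun v _ => this v]
    simp
  · intro v _ w _ hvw
    rw [Function.onFun, Finset.disjoint_left]
    intro M hv hw
    rw [Finset.mem_erase, Finset.mem_powerset] at hv hw
    obtain ⟨x, hx⟩ := Finset.nonempty_iff_ne_empty.2 hv.1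
    exact (Finset.disjoint_left.1 (star_disjoint n hn hvw)) (hv.2 hx) (hw.2 hx)
  · simp only [Finset.mem_biUnion, not_exists]
    intro v hv
    exact (Finset.mem_erase.1 hv.2).1 rfl

lemma S_subset_top : S n hn ⊆ (⊤ : SimpleGraph (Fin n)).edgeFinset := by
  intro x hx
  rw [mem_S] at hx
  obtain ⟨i, j, rfl⟩ := hx
  simp only [SimpleGraph.mem_edgeFinset, SimpleGraph.mem_edgeSet, SimpleGraph.top_adj]
  exact Lv_ne_Rv n hn i j

/-- The rest of the possible edges. -/
def Rc : Finset (Sym2 (Fin n)) := (⊤ : SimpleGraph (Fin n)).edgeFinset \ S n hn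

lemma card_Rc : (Rc n hn).card = n.choose 2 - 170 := by
  rw [Rc, Finset.card_sdiff_of_subset (S_subset_top n hn), card_S,
    SimpleGraph.card_edgeFinset_top_eq_card_choose_two, Fintype.card_fin]

/-- The graph associated to a pair (missing set, extra edges). -/
def Φ (p : Finset (Sym2 (Fin n)) × Finset (Sym2 (Fin n))) : SimpleGraph (Fin n) :=
  SimpleGraph.fromEdgeSet ((S n hn \ p.1) ∪ p.2 : Finset (Sym2 (Fin n)))

/-- The domain. -/
def D : Finset (Finset (Sym2 (Fin n)) × Finset (Sym2 (Fin n))) :=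
  (M0 n hn) ×ˢ (Rc n hn).powerset

lemma mem_D {p : Finset (Sym2 (Fin n)) × Finset (Sym2 (Fin n))} :
    p ∈ D n hn ↔ p.1 ∈ M0 n hn ∧ p.2 ⊆ Rc n hn := by
  rw [D, Finset.mem_product, Finset.mem_powerset]

lemma card_D : (D n hn).card = 1055 * 2 ^ (n.choose 2 - 170) := by
  rw [D, Finset.card_product, card_M0, Finset.card_powerset, card_Rc]

set_option linter.constructorNameAsVariable false in
set_option maxHeartbeats 1000000 in
lemma edgeSet_Φ {p : Finset (Sym2 (Fin n)) × Finset (Sym2 (Fin n))} (hp : p ∈ D n hn) :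
    (Φ n hn p).edgeSet = ((S n hn \ p.1) ∪ p.2 : Finset (Sym2 (Fin n))) := by
  rw [Φ, SimpleGraph.edgeSet_fromEdgeSet, sdiff_eq_left]
  rw [Set.disjoint_left]
  intro x hx hdiag
  rw [mem_D] at hp
  rw [Finset.coe_union, Set.mem_union] at hx
  have hx' : x ∈ (⊤ : SimpleGraph (Fin n)).edgeFinset := by
    rcases hx with hx | hx
    · exact S_subset_top n hn (Finset.mem_sdiff.1 (by exact_mod_cast hx)).1
    · exact (Finset.mem_sdiff.1 (hp.2 (by exact_mod_cast hx))).1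
  rw [SimpleGraph.mem_edgeFinset, SimpleGraph.edgeSet_top, Set.mem_compl_iff] at hx'
  exact hx' hdiag

lemma mem_Rc {x : Sym2 (Fin n)} :
    x ∈ Rc n hn ↔ x ∈ (⊤ : SimpleGraph (Fin n)).edgeFinset ∧ x ∉ S n hn :=
  Finset.mem_sdiff

lemma Φ_adj {p : Finset (Sym2 (Fin n)) × Finset (Sym2 (Fin n))} (hp : p ∈ D n hn)
    {v : Fin 34} (hv : p.1 ⊆ star n hn v) (i : Fin 5) {u : Fin 34} (hu : u ≠ v) :
    (Φ n hn p).Adj (Lv n hn i) (Rv n hn u) := by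
  rw [Φ, SimpleGraph.fromEdgeSet_adj]
  refine ⟨?_, Lv_ne_Rv n hn i u⟩
  rw [Finset.coe_union, Set.mem_union]
  left
  rw [Finset.mem_coe, Finset.mem_sdiff]
  refine ⟨(mem_S n hn).2 ⟨i, u, rfl⟩, fun hmem => ?_⟩
  have := hv hmem
  rw [mem_star] at this
  obtain ⟨i', h⟩ := this
  rw [edge_eq_iff] at h
  exact hu h.2


attribute [irreducible] Lv Rv S star M0 Rc Φ D

set_option maxHeartbeats 1600000 in
set_option linter.constructorNameAsVariable false in
lemma Φ_injOn : Set.InjOn (Φ n hn) (D n hn) := by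
  intro p hp q hq h
  have hp' := (mem_D n hn).1 (Finset.mem_coe.1 hp)
  have hq' := (mem_D n hn).1 (Finset.mem_coe.1 hq)
  have he : ((S n hn \ p.1) ∪ p.2 : Finset (Sym2 (Fin n)))
      = ((S n hn \ q.1) ∪ q.2 : Finset (Sym2 (Fin n))) := by
    have := (edgeSet_Φ n hn (Finset.mem_coe.1 hp)).symm.trans
      (h ▸ edgeSet_Φ n hn (Finset.mem_coe.1 hq))
    exact Finset.coe_injective this
  have hpS : Disjoint p.2 (S n hn) := by
    rw [Finset.disjoint_left]; intro x hx
    exact ((mem_Rc n hn).1 (hp'.2 hx)).2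
  have hqS : Disjoint q.2 (S n hn) := by
    rw [Finset.disjoint_left]; intro x hx
    exact ((mem_Rc n hn).1 (hq'.2 hx)).2
  have h1 : S n hn \ p.1 = S n hn \ q.1 := by
    have := congrArg (· ∩ S n hn) he
    simpa [Finset.union_inter_distrib_right, Finset.inter_eq_left.2 (Finset.sdiff_subset),
      (Finset.disjoint_iff_inter_eq_empty.1 hpS), (Finset.disjoint_iff_inter_eq_empty.1 hqS)]
      using this
  have h2 : p.2 = q.2 := by
    have := congrArg (· \ S n hn) he
    simpa [Finset.union_sdiff_distrib, Finset.sdiff_sdiff_self_left,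
      Finset.sdiff_eq_self_of_disjoint hpS, Finset.sdiff_eq_self_of_disjoint hqS] using this
  have h1' : p.1 = q.1 := by
    have hpsub := M0_subset_powerset_S n hn hp'.1
    have hqsub := M0_subset_powerset_S n hn hq'.1
    rw [← Finset.sdiff_sdiff_eq_self hpsub, h1, Finset.sdiff_sdiff_eq_self hqsub]
  exact Prod.ext h1' h2

end K532Aux

/-- For every `n ≥ 39` there is a `K_{5,32}`-intersecting family of
subgraphs of `K_n` of size at least `1055 · 2^(C(n,2) − 170)`, and this quantity exceeds
the trivial bound `2^(C(n,2) − 160)`. -/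
theorem K532_bound (n : ℕ) (hn : 39 ≤ n) :
    (∃ 𝓕 : Finset (SimpleGraph (Fin n)),
      IsIntersectingFamily (completeBipartiteGraph (Fin 5) (Fin 32)) 𝓕 ∧
      1055 * 2 ^ (n.choose 2 - 170) ≤ 𝓕.card) ∧
    1055 * 2 ^ (n.choose 2 - 170) > 2 ^ (n.choose 2 - 160) := by
  classical
  constructor
  · refine ⟨(K532Aux.D n hn).image (K532Aux.Φ n hn), ?_, ?_⟩
    · intro F₁ hF₁ F₂ hF₂
      rw [Finset.mem_image] at hF₁ hF₂
      obtain ⟨p, hp, rfl⟩ := hF₁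
      obtain ⟨q, hq, rfl⟩ := hF₂
      obtain ⟨v₁, hv₁⟩ := K532Aux.mem_M0 n hn ((K532Aux.mem_D n hn).1 hp).1
      obtain ⟨v₂, hv₂⟩ := K532Aux.mem_M0 n hn ((K532Aux.mem_D n hn).1 hq).1
      have hcard : 32 ≤ ((Finset.univ : Finset (Fin 34)) \ {v₁, v₂}).card := by
        have h1 : ({v₁, v₂} : Finset (Fin 34)).card ≤ 2 :=
          (Finset.card_insert_le _ _).trans (by simp)
        rw [Finset.card_sdiff_of_subset (Finset.subset_univ _), Finset.card_univ, Fintype.card_fin]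
        omega
      obtain ⟨T, hT, hTcard⟩ := Finset.exists_subset_card_eq hcard
      set r : Fin 32 → Fin 34 := fun b => ((T.equivFin.trans (finCongr hTcard)).symm b : Fin 34)
        with hr
      have hrT : ∀ b, r b ∈ T := fun b => Finset.coe_mem _
      have hrne : ∀ b, r b ≠ v₁ ∧ r b ≠ v₂ := by
        intro b
        have := hT (hrT b)
        rw [Finset.mem_sdiff, Finset.mem_insert, Finset.mem_singleton] at this
        exact ⟨fun h => this.2 (Or.inl h), fun h => this.2 (Or.inr h)⟩
      have hrinj : Function.Injective r := by
        intro a b hab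
        have : ((T.equivFin.trans (finCongr hTcard)).symm a : T)
            = ((T.equivFin.trans (finCongr hTcard)).symm b : T) := Subtype.ext hab
        simpa using (T.equivFin.trans (finCongr hTcard)).symm.injective this
      refine ⟨⟨Sum.elim (K532Aux.Lv n hn) (fun b => K532Aux.Rv n hn (r b)), ?_⟩, ?_⟩
      · intro a b hab
        match a, b with
        | Sum.inl a, Sum.inl b => simp [completeBipartiteGraph] at hab
        | Sum.inr a, Sum.inr b => simp [completeBipartiteGraph] at hab
        | Sum.inl a, Sum.inr b =>
          simp only [Sum.elim_inl, Sum.elim_inr, SimpleGraph.inf_adj]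
          exact ⟨K532Aux.Φ_adj n hn hp hv₁ a (hrne b).1,
            K532Aux.Φ_adj n hn hq hv₂ a (hrne b).2⟩
        | Sum.inr b, Sum.inl a =>
          simp only [Sum.elim_inl, Sum.elim_inr, SimpleGraph.inf_adj]
          exact ⟨(K532Aux.Φ_adj n hn hp hv₁ a (hrne b).1).symm,
            (K532Aux.Φ_adj n hn hq hv₂ a (hrne b).2).symm⟩
      · intro x y hxy
        match x, y with
        | Sum.inl a, Sum.inl b =>
          exact congrArg Sum.inl (K532Aux.Lv_inj n hn hxy)
        | Sum.inr a, Sum.inr b =>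
          exact congrArg Sum.inr (hrinj (K532Aux.Rv_inj n hn hxy))
        | Sum.inl a, Sum.inr b =>
          exact absurd hxy (K532Aux.Lv_ne_Rv n hn a (r b))
        | Sum.inr a, Sum.inl b =>
          exact absurd (Eq.symm hxy) (K532Aux.Lv_ne_Rv n hn b (r a))
    · rw [Finset.card_image_of_injOn (K532Aux.Φ_injOn n hn), K532Aux.card_D n hn]
  · have h741 : (39 : ℕ).choose 2 ≤ n.choose 2 := Nat.choose_le_choose 2 hn
    have : (39 : ℕ).choose 2 = 741 := by decide
    have h170 : 170 ≤ n.choose 2 := by omega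
    have hsplit : n.choose 2 - 160 = (n.choose 2 - 170) + 10 := by omega
    rw [hsplit, pow_add, show (2:ℕ)^10 = 1024 from by norm_num]
    have hx : 0 < 2 ^ (n.choose 2 - 170) := Nat.pow_pos (by norm_num)
    set x := 2 ^ (n.choose 2 - 170)
    omega
end

section
/- For every integer n ≥ 8 there exists a K_{1,1,4}-intersecting family 𝓕 of subgraphs of K_n with |𝓕| ≥ 19 · 2^{C(n,2) − 14}; note 19 · 2^{C(n,2) − 14} > 2^{C(n,2) − 10}, the trivial bound for K_{1,1,4}. -/
open SimpleGraph

namespace K114aux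

def gnat : (Σ i : Fin 3, ![Fin 1, Fin 1, Fin 4] i) → ℕ
  | ⟨0, _⟩ => 0
  | ⟨1, _⟩ => 1
  | ⟨2, x⟩ => x.val + 2

instance (i : Fin 3) : Fintype (![Fin 1, Fin 1, Fin 4] i) :=
  Fin.cases (Fin.fintype 1) (fun j => Fin.cases (Fin.fintype 1)
    (fun k => Fin.cases (Fin.fintype 4) (fun k => k.elim0) k) j) i

instance (i : Fin 3) : DecidableEq (![Fin 1, Fin 1, Fin 4] i) :=
  Fin.cases (instDecidableEqFin 1) (fun j => Fin.cases (instDecidableEqFin 1)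
    (fun k => Fin.cases (instDecidableEqFin 4) (fun k => k.elim0) k) j) i

lemma gnat_adj : ∀ v w : (Σ i : Fin 3, ![Fin 1, Fin 1, Fin 4] i), v.1 ≠ w.1 →
    gnat v ≠ gnat w ∧ gnat v < 6 ∧ gnat w < 6 ∧ (gnat v < 2 ∨ gnat w < 2) := by decide

lemma gnat_lt (v : (Σ i : Fin 3, ![Fin 1, Fin 1, Fin 4] i)) : gnat v < 6 := by
  revert v; decide

lemma gnat_inj : ∀ v w : (Σ i : Fin 3, ![Fin 1, Fin 1, Fin 4] i), gnat v = gnat w → v = w := by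
  decide

/-- a copy of `K_{1,1,4}` on vertices `0,…,5` of `Fin n`. -/
def H0 (n : ℕ) : SimpleGraph (Fin n) where
  Adj u v := u ≠ v ∧ u.val < 6 ∧ v.val < 6 ∧ (u.val < 2 ∨ v.val < 2)
  symm := ⟨by intro u v h; exact ⟨h.1.symm, h.2.2.1, h.2.1, h.2.2.2.symm⟩⟩
  loopless := ⟨by intro u h; exact h.1 rfl⟩

instance (n : ℕ) : DecidableRel (H0 n).Adj :=
  fun u v => inferInstanceAs (Decidable (u ≠ v ∧ u.val < 6 ∧ v.val < 6 ∧ (u.val < 2 ∨ v.val < 2)))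

/-- same graph on `Fin 6`, for counting. -/
def H6 : SimpleGraph (Fin 6) where
  Adj u v := u ≠ v ∧ (u.val < 2 ∨ v.val < 2)
  symm := ⟨by intro u v h; exact ⟨h.1.symm, h.2.symm⟩⟩
  loopless := ⟨by intro u h; exact h.1 rfl⟩

instance : DecidableRel H6.Adj :=
  fun u v => inferInstanceAs (Decidable (u ≠ v ∧ (u.val < 2 ∨ v.val < 2)))

lemma H6_card : H6.edgeFinset.card = 9 := by decide

lemma H0_card (n : ℕ) (hn : 6 ≤ n) : (H0 n).edgeFinset.card = 9 := by
  rw [← H6_card]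
  refine (Finset.card_bij (fun e _ => Sym2.map (Fin.castLE hn) e) ?_ ?_ ?_).symm
  · intro e he
    induction e using Sym2.ind with
    | _ u v =>
      rw [mem_edgeFinset, mem_edgeSet] at he
      obtain ⟨h1, h2⟩ := he
      show Sym2.map (Fin.castLE hn) s(u, v) ∈ (H0 n).edgeFinset
      rw [Sym2.map_pair_eq, mem_edgeFinset, mem_edgeSet]
      refine ⟨?_, by simpa using u.isLt, by simpa using v.isLt, by simpa using h2⟩
      simp only [ne_eq, Fin.ext_iff, Fin.coe_castLE]
      exact fun h => h1 (Fin.ext h)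
  · intro e₁ h₁ e₂ h₂ h
    exact Sym2.map.injective (Fin.castLE_injective hn) h
  · intro e he
    induction e using Sym2.ind with
    | _ u v =>
      rw [mem_edgeFinset, mem_edgeSet] at he
      obtain ⟨h1, hu, hv, h2⟩ := he
      refine ⟨s(⟨u.val, hu⟩, ⟨v.val, hv⟩), ?_, ?_⟩
      · rw [mem_edgeFinset, mem_edgeSet]
        refine ⟨?_, h2⟩
        simp only [ne_eq, Fin.ext_iff]
        exact fun h => h1 (Fin.ext h)
      · simp [Sym2.map_pair_eq, Fin.ext_iff]

end K114aux

/-- For every `n ≥ 8` there is a `K_{1,1,4}`-intersecting family of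
subgraphs of `K_n` of size at least `19 · 2^(C(n,2) − 14)`, and this quantity exceeds
the trivial bound `2^(C(n,2) − 10)`. -/
theorem K114_bound (n : ℕ) (hn : 8 ≤ n) :
    (∃ 𝓕 : Finset (SimpleGraph (Fin n)),
      IsIntersectingFamily (completeMultipartiteGraph ![Fin 1, Fin 1, Fin 4]) 𝓕 ∧
      19 * 2 ^ (n.choose 2 - 14) ≤ 𝓕.card) ∧
    19 * 2 ^ (n.choose 2 - 14) > 2 ^ (n.choose 2 - 10) := by
  classical
  have h6n : (6 : ℕ) ≤ n := by omega
  have hc : 28 ≤ n.choose 2 := by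
    calc 28 = Nat.choose 8 2 := by decide
    _ ≤ n.choose 2 := Nat.choose_le_choose 2 hn
  constructor
  · -- the family
    set H := K114aux.H0 n with hH
    set rest : Finset (Sym2 (Fin n)) :=
      (⊤ : SimpleGraph (Fin n)).edgeFinset \ H.edgeFinset with hrest
    have hrest_no : ∀ e ∈ rest, ¬ e.IsDiag ∧ e ∉ H.edgeSet := by
      intro e he
      rw [hrest, Finset.mem_sdiff] at he
      constructor
      · have := he.1
        rw [mem_edgeFinset, edgeSet_top] at this
        exact this
      · simpa [mem_edgeFinset] using he.2
    have key : ∀ S ∈ rest.powerset,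
        ((H ⊔ fromEdgeSet (↑S : Set (Sym2 (Fin n)))).edgeSet) \ H.edgeSet = ↑S := by
      intro S hS
      rw [Finset.mem_powerset] at hS
      ext e
      simp only [edgeSet_sup, edgeSet_fromEdgeSet, Set.mem_diff, Set.mem_union,
        Finset.mem_coe, Set.mem_setOf_eq]
      constructor
      · rintro ⟨(h | ⟨h, _⟩), hn'⟩
        · exact absurd h hn'
        · exact h
      · intro h
        have hh := hrest_no e (hS h)
        exact ⟨Or.inr ⟨h, hh.1⟩, hh.2⟩
    refine ⟨(rest.powerset).image
      (fun S : Finset (Sym2 (Fin n)) => H ⊔ fromEdgeSet (↑S : Set (Sym2 (Fin n)))), ?_, ?_⟩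
    · -- intersecting
      intro F₁ h₁ F₂ h₂
      rw [Finset.mem_image] at h₁ h₂
      obtain ⟨S₁, _, rfl⟩ := h₁
      obtain ⟨S₂, _, rfl⟩ := h₂
      have hle : H ≤ (H ⊔ fromEdgeSet ↑S₁) ⊓ (H ⊔ fromEdgeSet ↑S₂) :=
        le_inf le_sup_left le_sup_left
      refine ⟨(SimpleGraph.Hom.ofLE hle).comp
        ⟨fun v => ⟨K114aux.gnat v, by have := K114aux.gnat_lt v; omega⟩, ?_⟩, ?_⟩
      · intro a b hab
        have hab' : a.1 ≠ b.1 := hab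
        obtain ⟨hne, ha, hb, hlt⟩ := K114aux.gnat_adj a b hab'
        exact ⟨fun h => hne (congrArg Fin.val h), ha, hb, hlt⟩
      · intro a b h
        exact K114aux.gnat_inj a b (congrArg Fin.val h)
    · -- cardinality
      have hinj : Set.InjOn
          (fun S : Finset (Sym2 (Fin n)) => H ⊔ fromEdgeSet (↑S : Set (Sym2 (Fin n))))
          ↑rest.powerset := by
        intro S hS T hT h
        apply Finset.coe_injective
        rw [← key S (by simpa using hS), ← key T (by simpa using hT)]
        simp only at h
        rw [h]
      rw [Finset.card_image_of_injOn hinj, Finset.card_powerset]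
      have hsub : H.edgeFinset ⊆ (⊤ : SimpleGraph (Fin n)).edgeFinset :=
        edgeFinset_mono le_top
      have hrc : rest.card = n.choose 2 - 9 := by
        rw [hrest, Finset.card_sdiff_of_subset hsub, card_edgeFinset_top_eq_card_choose_two,
          Fintype.card_fin, K114aux.H0_card n h6n]
      rw [hrc]
      have h1 : n.choose 2 - 9 = (n.choose 2 - 14) + 5 := by omega
      rw [h1, pow_add]
      have : (0:ℕ) < 2 ^ (n.choose 2 - 14) := Nat.pow_pos (by norm_num)
      generalize 2 ^ (n.choose 2 - 14) = k at *
      omega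
  · have h1 : n.choose 2 - 10 = (n.choose 2 - 14) + 4 := by omega
    rw [h1, pow_add]
    have : (0:ℕ) < 2 ^ (n.choose 2 - 14) := Nat.pow_pos (by norm_num)
    generalize 2 ^ (n.choose 2 - 14) = k at *
    omega
end

section
/- For every integer n ≥ 13 there exists a K_{1,2,8}-intersecting family 𝓕 of subgraphs of K_n with |𝓕| ≥ 71 · 2^{C(n,2) − 32}; note 71 · 2^{C(n,2) − 32} > 2^{C(n,2) − 26}, the trivial bound for K_{1,2,8}. -/
set_option maxRecDepth 8000
open SimpleGraph Finset

namespace K128aux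

abbrev PatIdx := Option (Fin 10 × {s : Finset (Fin 3) // s ≠ Finset.univ})

def defIdx : PatIdx → Fin 10
  | none => 0
  | some p => p.1

def big (j : Fin 10) : Fin 13 := ⟨3 + j.val, by omega⟩

def te (p : Fin 3 × Fin 10) : Sym2 (Fin 13) := s(⟨p.1.val, by omega⟩, big p.2)

def topE : Finset (Sym2 (Fin 13)) := {s(0,1), s(0,2)}

def P : PatIdx → Finset (Fin 3 × Fin 10)
  | none => Finset.univ
  | some (i, s) => Finset.univ.filter (fun kj => kj.2 ≠ i ∨ kj.1 ∈ s.val)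

def Jpart (i : PatIdx) : Finset (Sym2 (Fin 13)) := topE ∪ (P i).image te

def Jfull : Finset (Sym2 (Fin 13)) := Jpart none

lemma card_PatIdx : Fintype.card PatIdx = 71 := by decide

lemma Jfull_card : Jfull.card = 32 := by decide

lemma Jfull_nondiag : ∀ e ∈ Jfull, ¬ e.IsDiag := by decide

lemma mem_P (i : PatIdx) (k : Fin 3) (j : Fin 10) (h : j ≠ defIdx i) : (k, j) ∈ P i := by
  match i with
  | none => exact mem_univ _
  | some (i', s) =>
    simp only [P, mem_filter, mem_univ, true_and]
    exact Or.inl h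

lemma te_mem (i : PatIdx) (k : Fin 3) (j : Fin 10) (h : j ≠ defIdx i) : te (k, j) ∈ Jpart i :=
  mem_union_right _ (mem_image_of_mem _ (mem_P i k j h))

lemma topE_mem (i : PatIdx) (e : Sym2 (Fin 13)) (he : e ∈ topE) : e ∈ Jpart i :=
  mem_union_left _ he

lemma Jpart_subset (i : PatIdx) : Jpart i ⊆ Jfull :=
  union_subset_union (subset_refl _) (image_subset_image (subset_univ _))

lemma te_inj : Function.Injective te := by
  rintro ⟨k, j⟩ ⟨k', j'⟩ h
  simp only [te, Sym2.eq_iff, big, Fin.mk.injEq] at h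
  have hk := k.isLt; have hk' := k'.isLt
  have : k.val = k'.val ∧ j.val = j'.val := by omega
  exact Prod.ext (Fin.ext this.1) (Fin.ext this.2)

lemma te_not_mem_topE (p : Fin 3 × Fin 10) : te p ∉ topE := by
  simp only [topE, mem_insert, mem_singleton, te, big, Sym2.eq_iff]
  simp only [Fin.ext_iff]
  simp only [Fin.val_zero, Fin.val_one]
  have := p.2.isLt
  omega

lemma P_inj : Function.Injective P := by
  rintro i j h
  match i, j with
  | none, none => rfl
  | none, some (j', t) =>
    exfalso
    obtain ⟨k₀, hk₀⟩ : ∃ k₀, k₀ ∉ t.val := by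
      by_contra hc; push_neg at hc
      exact t.2 (Finset.eq_univ_iff_forall.2 hc)
    have : (k₀, j') ∈ P (some (j', t)) := h ▸ mem_univ _
    simp only [P, mem_filter, mem_univ, true_and] at this
    tauto
  | some (i', s), none =>
    exfalso
    obtain ⟨k₀, hk₀⟩ : ∃ k₀, k₀ ∉ s.val := by
      by_contra hc; push_neg at hc
      exact s.2 (Finset.eq_univ_iff_forall.2 hc)
    have : (k₀, i') ∈ P (some (i', s)) := h.symm ▸ mem_univ _
    simp only [P, mem_filter, mem_univ, true_and] at this
    tauto
  | some (i', s), some (j', t) =>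
    obtain ⟨k₀, hk₀⟩ : ∃ k₀, k₀ ∉ s.val := by
      by_contra hc; push_neg at hc
      exact s.2 (Finset.eq_univ_iff_forall.2 hc)
    have hij : i' = j' := by
      by_contra hne
      have : (k₀, i') ∈ P (some (j', t)) := by
        simp only [P, mem_filter, mem_univ, true_and]
        exact Or.inl hne
      rw [← h] at this
      simp only [P, mem_filter, mem_univ, true_and] at this
      tauto
    subst hij
    have hst : s = t := by
      apply Subtype.ext
      ext k
      have h1 : ((k, i') ∈ P (some (i', s))) ↔ ((k, i') ∈ P (some (i', t))) := by rw [h]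
      simp only [P, mem_filter, mem_univ, true_and] at h1
      tauto
    rw [hst]

lemma Jpart_inj : Function.Injective Jpart := by
  intro i j h
  apply P_inj
  ext p
  have : te p ∈ Jpart i ↔ te p ∈ Jpart j := by rw [h]
  simp only [Jpart, mem_union, te_not_mem_topE, false_or] at this
  constructor <;> intro hp
  · rcases this.1 (mem_image_of_mem _ hp) with h'
    obtain ⟨q, hq, hqe⟩ := mem_image.1 h'
    exact te_inj hqe ▸ hq
  · rcases this.2 (mem_image_of_mem _ hp) with h'
    obtain ⟨q, hq, hqe⟩ := mem_image.1 h'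
    exact te_inj hqe ▸ hq


section
variable {n : ℕ}

def EE (hn : 13 ≤ n) : Sym2 (Fin 13) → Sym2 (Fin n) := Sym2.map (Fin.castLE hn)

lemma EE_inj (hn : 13 ≤ n) : Function.Injective (EE hn) :=
  Sym2.map.injective (Fin.castLE_injective hn)

def JE (hn : 13 ≤ n) (i : PatIdx) : Finset (Sym2 (Fin n)) := (Jpart i).image (EE hn)

def Oth (hn : 13 ≤ n) : Finset (Sym2 (Fin n)) :=
  (⊤ : SimpleGraph (Fin n)).edgeFinset \ (JE hn none)

def member (hn : 13 ≤ n) (p : PatIdx × Finset (Sym2 (Fin n))) : SimpleGraph (Fin n) :=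
  fromEdgeSet ↑(JE hn p.1 ∪ p.2)

lemma JE_nondiag (hn : 13 ≤ n) (i : PatIdx) {e : Sym2 (Fin n)} (he : e ∈ JE hn i) :
    ¬ e.IsDiag := by
  obtain ⟨e', he', rfl⟩ := mem_image.1 he
  rw [EE, Sym2.isDiag_map (Fin.castLE_injective hn)]
  exact Jfull_nondiag e' (Jpart_subset i he')

lemma JE_sub_top (hn : 13 ≤ n) (i : PatIdx) :
    JE hn i ⊆ (⊤ : SimpleGraph (Fin n)).edgeFinset := by
  intro e he
  rw [mem_edgeFinset, edgeSet_top]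
  exact JE_nondiag hn i he

lemma member_edgeSet (hn : 13 ≤ n) (i : PatIdx) (ex : Finset (Sym2 (Fin n)))
    (hex : ex ∈ (Oth hn).powerset) :
    (member hn (i, ex)).edgeSet = ↑(JE hn i ∪ ex) := by
  rw [member, edgeSet_fromEdgeSet, _root_.sdiff_eq_left]
  rw [Set.disjoint_left]
  rintro e he hd
  rcases Finset.mem_union.1 (Finset.mem_coe.1 he) with h | h
  · exact JE_nondiag hn i h hd
  · have := Finset.mem_sdiff.1 (Finset.mem_powerset.1 hex h)
    rw [mem_edgeFinset, edgeSet_top] at this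
    exact this.1 hd

lemma union_inter_JE (hn : 13 ≤ n) (i : PatIdx) (ex : Finset (Sym2 (Fin n)))
    (hex : ex ∈ (Oth hn).powerset) :
    (JE hn i ∪ ex) ∩ JE hn none = JE hn i ∧ (JE hn i ∪ ex) \ JE hn none = ex := by
  have h1 : JE hn i ⊆ JE hn none := Finset.image_subset_image (Jpart_subset i)
  have h2 : Disjoint ex (JE hn none) := by
    refine Finset.disjoint_left.2 fun e he he' => ?_
    have := Finset.mem_sdiff.1 (Finset.mem_powerset.1 hex he)
    exact this.2 he'
  constructor
  · rw [Finset.union_inter_distrib_right, Finset.inter_eq_left.2 h1,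
      Finset.disjoint_iff_inter_eq_empty.1 h2, Finset.union_empty]
  · rw [Finset.union_sdiff_distrib, Finset.sdiff_eq_empty_iff_subset.2 h1,
      _root_.sdiff_eq_self_iff_disjoint.2 h2.symm, Finset.empty_union]

lemma member_injOn (hn : 13 ≤ n) :
    Set.InjOn (member hn) ↑((Finset.univ : Finset PatIdx) ×ˢ (Oth hn).powerset) := by
  rintro ⟨i, ex⟩ hp ⟨j, ex'⟩ hq h
  simp only [Finset.coe_product, Set.mem_prod, Finset.mem_coe, Finset.mem_powerset] at hp hq
  have hp2 : ex ∈ (Oth hn).powerset := Finset.mem_powerset.2 hp.2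
  have hq2 : ex' ∈ (Oth hn).powerset := Finset.mem_powerset.2 hq.2
  have hes : (JE hn i ∪ ex : Finset (Sym2 (Fin n))) = JE hn j ∪ ex' := by
    have := congrArg SimpleGraph.edgeSet h
    rw [member_edgeSet hn i ex hp2, member_edgeSet hn j ex' hq2] at this
    exact_mod_cast Finset.coe_injective this
  have hJ : JE hn i = JE hn j := by
    have a := (union_inter_JE hn i ex hp2).1
    have b := (union_inter_JE hn j ex' hq2).1
    rw [← a, ← b, hes]
  have hi : i = j := Jpart_inj (Finset.image_injective (EE_inj hn) hJ)
  have hx : ex = ex' := by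
    have a := (union_inter_JE hn i ex hp2).2
    have b := (union_inter_JE hn j ex' hq2).2
    rw [← a, ← b, hes]
  rw [hi, hx]

abbrev HV := (Σ i : Fin 3, (![Fin 1, Fin 2, Fin 8]) i)

def vmap (g : Fin 8 → Fin 10) : HV → Fin 13
  | ⟨0, _⟩ => 0
  | ⟨1, x⟩ => ⟨1 + (x : Fin 2).val, by omega⟩
  | ⟨2, x⟩ => big (g (x : Fin 8))

lemma vmap_inj (g : Fin 8 → Fin 10) (hg : Function.Injective g) :
    Function.Injective (vmap g) := by
  rintro ⟨i, x⟩ ⟨j, y⟩ h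
  match i, x, j, y with
  | 0, x, 0, y => exact congrArg (Sigma.mk 0) (Subsingleton.elim (α := Fin 1) x y)
  | 1, x, 1, y =>
    simp only [vmap, Fin.mk.injEq] at h
    have : x = y := by
      have hx := (x : Fin 2).isLt; have hy := (y : Fin 2).isLt
      exact Fin.ext (by omega)
    rw [this]
  | 2, x, 2, y =>
    simp only [vmap, big, Fin.mk.injEq] at h
    have : g x = g y := Fin.ext (by omega)
    rw [hg this]
  | 0, x, 1, y => simp only [vmap, Fin.ext_iff, big] at h; omega
  | 0, x, 2, y => simp only [vmap, Fin.ext_iff, big] at h; omega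
  | 1, x, 0, y => simp only [vmap, Fin.ext_iff, big] at h; omega
  | 1, x, 2, y =>
    simp only [vmap, Fin.ext_iff, big] at h
    have := (x : Fin 2).isLt
    omega
  | 2, x, 0, y => simp only [vmap, Fin.ext_iff, big] at h; omega
  | 2, x, 1, y =>
    simp only [vmap, Fin.ext_iff, big] at h
    have := (y : Fin 2).isLt
    omega

lemma vmap_edge (r : PatIdx) (g : Fin 8 → Fin 10) (hg : ∀ k, g k ≠ defIdx r) :
    ∀ v w : HV, v.1 ≠ w.1 → s(vmap g v, vmap g w) ∈ Jpart r := by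
  rintro ⟨i, x⟩ ⟨j, y⟩ hne
  match i, x, j, y with
  | 0, x, 0, y => exact absurd rfl hne
  | 1, x, 1, y => exact absurd rfl hne
  | 2, x, 2, y => exact absurd rfl hne
  | 0, x, 1, y =>
    apply topE_mem
    show s((0 : Fin 13), (⟨1 + (y : Fin 2).val, by have := (y : Fin 2).isLt; omega⟩ : Fin 13)) ∈ topE
    have hy := (y : Fin 2).isLt
    have h0 : ((0 : Fin 13)).val = 0 := rfl
    have h1 : ((1 : Fin 13)).val = 1 := rfl
    have h2 : ((2 : Fin 13)).val = 2 := rfl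
    simp only [topE, mem_insert, mem_singleton, Sym2.eq_iff, Fin.ext_iff, and_true, true_and]
    omega
  | 1, y, 0, x =>
    apply topE_mem
    show s((⟨1 + (y : Fin 2).val, by have := (y : Fin 2).isLt; omega⟩ : Fin 13), (0 : Fin 13)) ∈ topE
    have hy := (y : Fin 2).isLt
    have h0 : ((0 : Fin 13)).val = 0 := rfl
    have h1 : ((1 : Fin 13)).val = 1 := rfl
    have h2 : ((2 : Fin 13)).val = 2 := rfl
    simp only [topE, mem_insert, mem_singleton, Sym2.eq_iff, Fin.ext_iff, and_true, true_and]
    omega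
  | 0, x, 2, y => exact te_mem r 0 (g y) (hg y)
  | 2, y, 0, x =>
    rw [Sym2.eq_swap]
    exact te_mem r 0 (g y) (hg y)
  | 1, y, 2, x =>
    exact te_mem r ⟨1 + (y : Fin 2).val, by have := (y : Fin 2).isLt; omega⟩ (g x) (hg x)
  | 2, x, 1, y =>
    rw [Sym2.eq_swap]
    exact te_mem r ⟨1 + (y : Fin 2).val, by have := (y : Fin 2).isLt; omega⟩ (g x) (hg x)

lemma member_adj (hn : 13 ≤ n) (i : PatIdx) (ex : Finset (Sym2 (Fin n)))
    {x y : Fin 13} (hxy : x ≠ y) (he : s(x, y) ∈ Jpart i) :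
    (member hn (i, ex)).Adj (Fin.castLE hn x) (Fin.castLE hn y) := by
  rw [member, fromEdgeSet_adj]
  refine ⟨?_, fun h => hxy (Fin.castLE_injective hn h)⟩
  apply Finset.mem_coe.2
  apply Finset.mem_union_left
  have : s(Fin.castLE hn x, Fin.castLE hn y) = EE hn s(x, y) :=
    (Sym2.map_pair_eq _ _ _).symm
  rw [this]
  exact Finset.mem_image_of_mem _ he

lemma Oth_card (hn : 13 ≤ n) : (Oth hn).card = n.choose 2 - 32 := by
  rw [Oth, card_sdiff_of_subset (JE_sub_top hn none)]
  have h1 : (JE hn none).card = 32 := by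
    rw [JE, Finset.card_image_of_injective _ (EE_inj hn)]
    exact Jfull_card
  have h2 : ((⊤ : SimpleGraph (Fin n)).edgeFinset).card = n.choose 2 := by
    rw [card_edgeFinset_top_eq_card_choose_two, Fintype.card_fin]
  rw [h1, h2]

theorem K128_bound' (n : ℕ) (hn : 13 ≤ n)
    (H : SimpleGraph ((Σ i : Fin 3, (![Fin 1, Fin 2, Fin 8]) i)))
    (hH : H = completeMultipartiteGraph ![Fin 1, Fin 2, Fin 8]) :
    ∃ 𝓕 : Finset (SimpleGraph (Fin n)),
      (∀ F₁ ∈ 𝓕, ∀ F₂ ∈ 𝓕, ∃ f : H →g (F₁ ⊓ F₂), Function.Injective f) ∧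
      71 * 2 ^ (n.choose 2 - 32) ≤ 𝓕.card := by
  classical
  subst hH
  refine ⟨(Finset.univ ×ˢ (Oth hn).powerset).image (member hn), ?_, ?_⟩
  · rintro F₁ hF₁ F₂ hF₂
    obtain ⟨⟨i, ex⟩, hp, rfl⟩ := Finset.mem_image.1 hF₁
    obtain ⟨⟨j, ex'⟩, hq, rfl⟩ := Finset.mem_image.1 hF₂
    set d1 := defIdx i with hd1
    set d2 := defIdx j with hd2
    have hcard : 8 ≤ (({d1, d2} : Finset (Fin 10))ᶜ).card := by
      have h2 : ({d1, d2} : Finset (Fin 10)).card ≤ 2 :=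
        (Finset.card_insert_le _ _).trans (by simp)
      rw [Finset.card_compl]
      simp only [Fintype.card_fin]
      omega
    set g : Fin 8 → Fin 10 :=
      fun k => (({d1, d2} : Finset (Fin 10))ᶜ).orderEmbOfCardLe hcard k with hgdef
    have hmem : ∀ k, g k ∈ ({d1, d2} : Finset (Fin 10))ᶜ := fun k =>
      Finset.orderEmbOfCardLe_mem _ hcard k
    have hg1 : ∀ k, g k ≠ d1 := fun k h =>
      (Finset.mem_compl.1 (hmem k)) (by rw [h]; exact Finset.mem_insert_self _ _)
    have hg2 : ∀ k, g k ≠ d2 := fun k h =>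
      (Finset.mem_compl.1 (hmem k))
        (by rw [h]; exact Finset.mem_insert_of_mem (Finset.mem_singleton_self _))
    have hginj : Function.Injective g := fun a b h =>
      ((({d1, d2} : Finset (Fin 10))ᶜ).orderEmbOfCardLe hcard).injective h
    refine ⟨⟨fun v => Fin.castLE hn (vmap g v), ?_⟩, ?_⟩
    · intro v w hvw
      have hvw' : v.1 ≠ w.1 := by
        simpa using hvw
      have hne : vmap g v ≠ vmap g w := fun h =>
        hvw' (congrArg Sigma.fst (vmap_inj g hginj h))
      rw [SimpleGraph.inf_adj]
      exact ⟨member_adj hn i ex hne (vmap_edge i g hg1 v w hvw'),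
             member_adj hn j ex' hne (vmap_edge j g hg2 v w hvw')⟩
    · exact fun a b h => vmap_inj g hginj (Fin.castLE_injective hn h)
  · rw [Finset.card_image_of_injOn (member_injOn hn), Finset.card_product,
      Finset.card_univ, card_PatIdx, Finset.card_powerset, Oth_card hn]

end
end K128aux

/-- For every `n ≥ 13` there is a `K_{1,2,8}`-intersecting family of
subgraphs of `K_n` of size at least `71 · 2^(C(n,2) − 32)`, and this quantity exceeds
the trivial bound `2^(C(n,2) − 26)`. -/
theorem K128_bound (n : ℕ) (hn : 13 ≤ n) :
    (∃ 𝓕 : Finset (SimpleGraph (Fin n)),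
      IsIntersectingFamily (completeMultipartiteGraph ![Fin 1, Fin 2, Fin 8]) 𝓕 ∧
      71 * 2 ^ (n.choose 2 - 32) ≤ 𝓕.card) ∧
    71 * 2 ^ (n.choose 2 - 32) > 2 ^ (n.choose 2 - 26) := by
  constructor
  · obtain ⟨𝓕, h1, h2⟩ := K128aux.K128_bound' n hn _ rfl
    exact ⟨𝓕, fun F₁ hF₁ F₂ hF₂ => h1 F₁ hF₁ F₂ hF₂, h2⟩
  · have hc : 78 ≤ n.choose 2 := by
      calc (78 : ℕ) = Nat.choose 13 2 := by norm_num [Nat.choose]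
        _ ≤ n.choose 2 := Nat.choose_le_choose 2 hn
    have h6 : n.choose 2 - 26 = (n.choose 2 - 32) + 6 := by omega
    rw [h6, pow_add]
    have hx : 0 < 2 ^ (n.choose 2 - 32) := Nat.pow_pos (by norm_num)
    set x := 2 ^ (n.choose 2 - 32)
    have : (2:ℕ)^6 = 64 := by norm_num
    rw [this]
    omega
end

section
/- For every integer n ≥ 22 there exists a K_{2,2,16}-intersecting family 𝓕 of subgraphs of K_n with |𝓕| ≥ 271 · 2^{C(n,2) − 76}; note 271 · 2^{C(n,2) − 76} > 2^{C(n,2) − 68}, the trivial bound for K_{2,2,16}. -/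
open SimpleGraph

section Aux
open Finset
variable (n : ℕ) (hn : 22 ≤ n)
def sm (j : Fin 4) : Fin n := ⟨j.val, by omega⟩
def bv (i : Fin 18) : Fin n := ⟨4 + i.val, by omega⟩
def edm (p : Fin 18 × Fin 4) : Sym2 (Fin n) := s(bv n hn p.1, sm n hn p.2)

lemma edm_inj : Function.Injective (edm n hn) := by
  rintro ⟨i, j⟩ ⟨i', j'⟩ h
  simp only [edm, Sym2.eq_iff, sm, bv, Fin.ext_iff] at h
  have : i.val = i'.val ∧ j.val = j'.val := by omega
  simp [Prod.ext_iff, Fin.ext_iff, this.1, this.2]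

def ABs : Finset (Sym2 (Fin n)) :=
  {s(sm n hn ⟨0, by omega⟩, sm n hn ⟨2, by omega⟩), s(sm n hn ⟨0, by omega⟩, sm n hn ⟨3, by omega⟩), s(sm n hn ⟨1, by omega⟩, sm n hn ⟨2, by omega⟩), s(sm n hn ⟨1, by omega⟩, sm n hn ⟨3, by omega⟩)}

def Core : Finset (Sym2 (Fin n)) := ABs n hn ∪ Finset.univ.image (edm n hn)

lemma ABs_card : (ABs n hn).card = 4 := by
  simp only [ABs]
  rw [card_insert_of_notMem, card_insert_of_notMem, card_insert_of_notMem, card_singleton] <;>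
    simp [Sym2.eq_iff, sm, Fin.ext_iff]

lemma disj_ABs_edm : Disjoint (ABs n hn) (Finset.univ.image (edm n hn)) := by
  rw [Finset.disjoint_left]
  intro e he he'
  simp only [mem_image, mem_univ, true_and] at he'
  obtain ⟨⟨i, j⟩, rfl⟩ := he'
  simp only [ABs, mem_insert, mem_singleton, edm, Sym2.eq_iff, sm, bv, Fin.ext_iff] at he
  omega

lemma Core_card : (Core n hn).card = 76 := by
  rw [Core, card_union_of_disjoint (disj_ABs_edm n hn), ABs_card,
    card_image_of_injective _ (edm_inj n hn)]
  simp


lemma Core_nodiag {e : Sym2 (Fin n)} (he : e ∈ Core n hn) : ¬ e.IsDiag := by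
  simp only [Core, mem_union, ABs, mem_insert, mem_singleton, mem_image, mem_univ, true_and] at he
  rcases he with (rfl | rfl | rfl | rfl) | ⟨⟨i, j⟩, rfl⟩ <;>
      simp [edm, sm, bv, Fin.ext_iff]
  have := j.isLt; omega

lemma Core_subset : Core n hn ⊆ (⊤ : SimpleGraph (Fin n)).edgeFinset := by
  intro e he
  rw [mem_edgeFinset, edgeSet_top, Set.mem_compl_iff, Sym2.mem_diagSet]
  exact Core_nodiag n hn he

noncomputable def Rest : Finset (Sym2 (Fin n)) :=
  (⊤ : SimpleGraph (Fin n)).edgeFinset \ Core n hn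

lemma Rest_card : (Rest n hn).card = n.choose 2 - 76 := by
  rw [Rest, card_sdiff_of_subset (Core_subset n hn), Core_card,
    card_edgeFinset_top_eq_card_choose_two, Fintype.card_fin]

noncomputable def ι (p : Finset (Fin 18 × Fin 4) × Finset (Sym2 (Fin n))) :
    SimpleGraph (Fin n) :=
  fromEdgeSet (((Core n hn \ p.1.image (edm n hn)) ∪ p.2 : Finset (Sym2 (Fin n))) : Set (Sym2 (Fin n)))

lemma ι_edgeSet (p : Finset (Fin 18 × Fin 4) × Finset (Sym2 (Fin n)))
    (hT : p.2 ⊆ Rest n hn) :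
    (ι n hn p).edgeSet = (((Core n hn \ p.1.image (edm n hn)) ∪ p.2 : Finset (Sym2 (Fin n))) : Set (Sym2 (Fin n))) := by
  rw [ι, edgeSet_fromEdgeSet]
  apply _root_.sdiff_eq_self_iff_disjoint.mpr
  rw [Set.disjoint_left]
  intro e hd he
  rw [Finset.coe_union, Set.mem_union] at he
  rcases he with he | he
  · exact Core_nodiag n hn (Finset.mem_sdiff.mp (by exact_mod_cast he)).1 hd
  · have := hT (by exact_mod_cast he)
    rw [Rest, Finset.mem_sdiff, mem_edgeFinset, edgeSet_top] at this
    exact this.1 hd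

lemma ι_injOn : Set.InjOn (ι n hn) ((D18 ×ˢ (Rest n hn).powerset : Finset (Finset (Fin 18 × Fin 4) × Finset (Sym2 (Fin n)))) : Set (Finset (Fin 18 × Fin 4) × Finset (Sym2 (Fin n)))) := by
  rintro ⟨S₁, T₁⟩ h₁ ⟨S₂, T₂⟩ h₂ h
  simp only [Finset.coe_mem, Finset.mem_coe, Finset.mem_product, Finset.mem_powerset] at h₁ h₂
  have hE : ((Core n hn \ S₁.image (edm n hn)) ∪ T₁ : Finset (Sym2 (Fin n)))
      = (Core n hn \ S₂.image (edm n hn)) ∪ T₂ := by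
    have := congrArg SimpleGraph.edgeSet h
    rw [ι_edgeSet n hn _ h₁.2, ι_edgeSet n hn _ h₂.2] at this
    exact_mod_cast Finset.coe_injective this
  have hTc : ∀ (T : Finset (Sym2 (Fin n))), T ⊆ Rest n hn →
      ∀ e ∈ Core n hn, e ∉ T := by
    intro T hT e he heT
    have := hT heT
    rw [Rest, Finset.mem_sdiff] at this
    exact this.2 he
  have hS : S₁.image (edm n hn) = S₂.image (edm n hn) := by
    ext e
    constructor <;> intro heS
    · have heC : e ∈ Core n hn := by
        rw [Core]; exact mem_union_right _ (by
          obtain ⟨q, _, rfl⟩ := Finset.mem_image.mp heS; exact mem_image_of_mem _ (mem_univ q))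
      by_contra he2
      have : e ∈ (Core n hn \ S₂.image (edm n hn)) ∪ T₂ := by
        rw [mem_union, mem_sdiff]; exact Or.inl ⟨heC, he2⟩
      rw [← hE, mem_union, mem_sdiff] at this
      rcases this with ⟨_, h'⟩ | h'
      · exact h' heS
      · exact hTc T₁ h₁.2 e heC h'
    · have heC : e ∈ Core n hn := by
        rw [Core]; exact mem_union_right _ (by
          obtain ⟨q, _, rfl⟩ := Finset.mem_image.mp heS; exact mem_image_of_mem _ (mem_univ q))
      by_contra he2
      have : e ∈ (Core n hn \ S₁.image (edm n hn)) ∪ T₁ := by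
        rw [mem_union, mem_sdiff]; exact Or.inl ⟨heC, he2⟩
      rw [hE, mem_union, mem_sdiff] at this
      rcases this with ⟨_, h'⟩ | h'
      · exact h' heS
      · exact hTc T₂ h₂.2 e heC h'
  have hS' : S₁ = S₂ := Finset.image_injective (edm_inj n hn) hS
  have hT' : T₁ = T₂ := by
    ext e
    constructor <;> intro heT
    · have heC : e ∉ Core n hn := by
        intro hc
        have := h₁.2 heT; rw [Rest, mem_sdiff] at this; exact this.2 hc
      have : e ∈ (Core n hn \ S₂.image (edm n hn)) ∪ T₂ := by
        rw [← hE]; exact mem_union_right _ heT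
      rw [mem_union, mem_sdiff] at this
      rcases this with ⟨hc, _⟩ | h' 
      · exact absurd hc heC
      · exact h'
    · have heC : e ∉ Core n hn := by
        intro hc
        have := h₂.2 heT; rw [Rest, mem_sdiff] at this; exact this.2 hc
      have : e ∈ (Core n hn \ S₁.image (edm n hn)) ∪ T₁ := by
        rw [hE]; exact mem_union_right _ heT
      rw [mem_union, mem_sdiff] at this
      rcases this with ⟨hc, _⟩ | h'
      · exact absurd hc heC
      · exact h'
  rw [hS', hT']



def D18 : Finset (Finset (Fin 18 × Fin 4)) :=
  insert ∅ (Finset.univ.biUnion fun v : Fin 18 =>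
    ((Finset.univ.powerset.filter Finset.Nonempty).image
      (fun t : Finset (Fin 4) => t.image (fun j => (v, j)))))

lemma D18_witness {S : Finset (Fin 18 × Fin 4)} (hS : S ∈ D18) :
    ∃ v, ∀ p ∈ S, p.1 = v := by
  simp only [D18, mem_insert, mem_biUnion, mem_image, mem_univ, true_and] at hS
  rcases hS with rfl | ⟨v, ⟨t, _, rfl⟩⟩
  · exact ⟨0, by simp⟩
  · exact ⟨v, by simp⟩

lemma D18_card : D18.card = 271 := by
  rw [D18, card_insert_of_notMem, Finset.card_biUnion]
  · have : ∀ v : Fin 18,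
        (((Finset.univ.powerset.filter Finset.Nonempty).image
          (fun t : Finset (Fin 4) => t.image (fun j => (v, j))))).card = 15 := by
      intro v
      rw [Finset.card_image_of_injective]
      · decide
      · exact Finset.image_injective (fun a b h => by simpa [Prod.ext_iff] using h)
    rw [Finset.sum_congr rfl fun v _ => this v]
    simp
  · intro v _ w _ hvw
    rw [Function.onFun, Finset.disjoint_left]
    rintro S hS hS'
    simp only [mem_image, mem_filter, mem_powerset, mem_univ] at hS hS'
    obtain ⟨t, ⟨-, ht⟩, rfl⟩ := hS
    obtain ⟨u, ⟨-, hu⟩, he⟩ := hS'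
    obtain ⟨j, hj⟩ := ht
    have : (v, j) ∈ u.image (fun j => (w, j)) := by
      rw [he]; exact mem_image_of_mem _ hj
    simp only [mem_image] at this
    obtain ⟨j', _, hj'⟩ := this
    simp only [Prod.ext_iff] at hj'
    exact hvw hj'.1.symm
  · intro h
    simp only [mem_biUnion, mem_image, mem_filter, mem_powerset, mem_univ] at h
    obtain ⟨v, -, t, ⟨-, ht⟩, he⟩ := h
    exact ht.ne_empty (Finset.image_eq_empty.mp he)

def vmap (k : Fin 16 → Fin 18) :
    (Σ i : Fin 3, ![Fin 2, Fin 2, Fin 16] i) → Fin n :=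
  fun x => match x with
  | ⟨⟨0,_⟩, a⟩ => sm n hn ⟨(a : Fin 2).val, by have := (a : Fin 2).isLt; omega⟩
  | ⟨⟨1,_⟩, a⟩ => sm n hn ⟨2 + (a : Fin 2).val, by have := (a : Fin 2).isLt; omega⟩
  | ⟨⟨2,_⟩, a⟩ => bv n hn (k a)

lemma vmap_inj (k : Fin 16 → Fin 18) (hk : Function.Injective k) :
    Function.Injective (vmap n hn k) := by
  rintro ⟨⟨iv, hi⟩, a⟩ ⟨⟨jv, hj⟩, b⟩ h
  interval_cases iv <;> interval_cases jv <;>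
    simp only [vmap, sm, bv, Fin.mk.injEq] at h <;>
    first
    | (exfalso
       first
       | (have ha := (a : Fin 2).isLt; have hb := (b : Fin 2).isLt; omega)
       | (have ha := (a : Fin 2).isLt; have hb := (b : Fin 16).isLt; omega)
       | (have ha := (a : Fin 16).isLt; have hb := (b : Fin 2).isLt; omega))
    | exact Sigma.ext rfl (heq_of_eq (show (a : Fin 2) = (b : Fin 2) from Fin.ext (by omega)))
    | exact Sigma.ext rfl (heq_of_eq (show (a : Fin 16) = (b : Fin 16) from
        hk (Fin.ext (by omega : ((k a) : ℕ) = (k b : ℕ)))))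

lemma AB_mem (a b : Fin 4) (ha : a.val < 2) (hb : 2 ≤ b.val) :
    s(sm n hn a, sm n hn b) ∈ Core n hn := by
  apply mem_union_left
  simp only [ABs, mem_insert, mem_singleton, Sym2.eq_iff, sm, Fin.mk.injEq]
  have := b.isLt
  omega

lemma edm_mem (i : Fin 18) (j : Fin 4) : edm n hn (i, j) ∈ Core n hn :=
  mem_union_right _ (mem_image_of_mem _ (mem_univ _))

lemma AB_not_edm (a b : Fin 4) (S : Finset (Fin 18 × Fin 4)) :
    s(sm n hn a, sm n hn b) ∉ S.image (edm n hn) := by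
  intro h
  obtain ⟨⟨i, j⟩, -, he⟩ := mem_image.mp h
  simp only [edm, Sym2.eq_iff, sm, bv, Fin.mk.injEq] at he
  have := a.isLt; have := b.isLt
  omega

lemma edm_not_mem (i : Fin 18) (j : Fin 4) (S : Finset (Fin 18 × Fin 4)) (v : Fin 18)
    (hv : ∀ p ∈ S, p.1 = v) (hiv : i ≠ v) : edm n hn (i, j) ∉ S.image (edm n hn) := by
  intro h
  obtain ⟨q, hq, he⟩ := mem_image.mp h
  have hq2 := edm_inj n hn he
  have h2 := hv q hq
  rw [hq2] at h2
  exact hiv h2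

lemma ι_adj (S : Finset (Fin 18 × Fin 4)) (T : Finset (Sym2 (Fin n))) (x y : Fin n)
    (hxy : x ≠ y) (hC : s(x, y) ∈ Core n hn) (hS : s(x, y) ∉ S.image (edm n hn)) :
    (ι n hn (S, T)).Adj x y := by
  rw [ι, fromEdgeSet_adj]
  exact ⟨by exact_mod_cast mem_union_left _ (mem_sdiff.mpr ⟨hC, hS⟩), hxy⟩

lemma intersecting (S₁ S₂ : Finset (Fin 18 × Fin 4)) (T₁ T₂ : Finset (Sym2 (Fin n)))
    (h1 : S₁ ∈ D18) (h2 : S₂ ∈ D18) :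
    ContainsCopy (completeMultipartiteGraph ![Fin 2, Fin 2, Fin 16])
      (ι n hn (S₁, T₁) ⊓ ι n hn (S₂, T₂)) := by
  obtain ⟨v₁, hv₁⟩ := D18_witness h1
  obtain ⟨v₂, hv₂⟩ := D18_witness h2
  have hU : 16 ≤ ((univ : Finset (Fin 18)).filter (fun i => i ≠ v₁ ∧ i ≠ v₂)).card := by
    have hsub : (univ : Finset (Fin 18)) \ {v₁, v₂} ⊆
        (univ : Finset (Fin 18)).filter (fun i => i ≠ v₁ ∧ i ≠ v₂) := by
      intro i hi
      rw [mem_sdiff, mem_insert, mem_singleton] at hi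
      rw [mem_filter]
      exact ⟨mem_univ _, by push_neg at hi; exact hi.2⟩
    have h1 : ((univ : Finset (Fin 18)) \ {v₁, v₂}).card ≥ 18 - 2 := by
      rw [card_sdiff_of_subset (subset_univ _)]
      have := card_insert_le v₁ ({v₂} : Finset (Fin 18))
      simp only [card_univ, Fintype.card_fin]
      have := card_singleton v₂
      omega
    have := card_le_card hsub
    omega
  obtain ⟨V, hVU, hV16⟩ := Finset.exists_subset_card_eq hU
  set k : Fin 16 → Fin 18 := fun a => (V.orderIsoOfFin hV16 a : Fin 18) with hkdef
  have hk : Function.Injective k := by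
    intro a b h
    have := Subtype.ext (p := fun x => x ∈ V) h
    exact (V.orderIsoOfFin hV16).injective this
  have hkv : ∀ a, k a ≠ v₁ ∧ k a ≠ v₂ := fun a =>
    (mem_filter.mp (hVU (V.orderIsoOfFin hV16 a).2)).2
  refine ⟨⟨vmap n hn k, ?_⟩, vmap_inj n hn k hk⟩
  rintro ⟨⟨iv, hi⟩, a⟩ ⟨⟨jv, hj⟩, b⟩ hadj
  simp only [comap_adj, top_adj, ne_eq, Fin.mk.injEq] at hadj
  have hne : iv ≠ jv := hadj
  rw [inf_adj]
  have hadj2 : ∀ x y : Fin n, x ≠ y → s(x, y) ∈ Core n hn →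
      s(x, y) ∉ S₁.image (edm n hn) → s(x, y) ∉ S₂.image (edm n hn) →
      (ι n hn (S₁, T₁)).Adj x y ∧ (ι n hn (S₂, T₂)).Adj x y :=
    fun x y h hc h1 h2 => ⟨ι_adj n hn _ _ _ _ h hc h1, ι_adj n hn _ _ _ _ h hc h2⟩
  have case01 : ∀ (a : Fin 2) (b : Fin 2),
      (ι n hn (S₁, T₁)).Adj (sm n hn ⟨a.val, by omega⟩) (sm n hn ⟨2 + b.val, by omega⟩) ∧
      (ι n hn (S₂, T₂)).Adj (sm n hn ⟨a.val, by omega⟩) (sm n hn ⟨2 + b.val, by omega⟩) := by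
    intro a b
    apply hadj2
    · have := a.isLt; have := b.isLt
      simp only [sm, ne_eq, Fin.mk.injEq]
      omega
    · exact AB_mem n hn _ _ (by simpa using a.isLt) (by simp)
    · exact AB_not_edm n hn _ _ _
    · exact AB_not_edm n hn _ _ _
  have case02 : ∀ (a : Fin 2) (c : Fin 16),
      (ι n hn (S₁, T₁)).Adj (sm n hn ⟨a.val, by omega⟩) (bv n hn (k c)) ∧
      (ι n hn (S₂, T₂)).Adj (sm n hn ⟨a.val, by omega⟩) (bv n hn (k c)) := by
    intro a c
    apply hadj2
    · have := a.isLt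
      simp only [sm, bv, ne_eq, Fin.mk.injEq]
      omega
    · rw [Sym2.eq_swap]; exact edm_mem n hn _ _
    · rw [Sym2.eq_swap]; exact edm_not_mem n hn _ _ _ _ hv₁ (hkv _).1
    · rw [Sym2.eq_swap]; exact edm_not_mem n hn _ _ _ _ hv₂ (hkv _).2
  have case12 : ∀ (b : Fin 2) (c : Fin 16),
      (ι n hn (S₁, T₁)).Adj (sm n hn ⟨2 + b.val, by omega⟩) (bv n hn (k c)) ∧
      (ι n hn (S₂, T₂)).Adj (sm n hn ⟨2 + b.val, by omega⟩) (bv n hn (k c)) := by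
    intro b c
    apply hadj2
    · have := b.isLt
      simp only [sm, bv, ne_eq, Fin.mk.injEq]
      omega
    · rw [Sym2.eq_swap]; exact edm_mem n hn _ _
    · rw [Sym2.eq_swap]; exact edm_not_mem n hn _ _ _ _ hv₁ (hkv _).1
    · rw [Sym2.eq_swap]; exact edm_not_mem n hn _ _ _ _ hv₂ (hkv _).2
  have symm2 : ∀ x y : Fin n,
      (ι n hn (S₁, T₁)).Adj x y ∧ (ι n hn (S₂, T₂)).Adj x y →
      (ι n hn (S₁, T₁)).Adj y x ∧ (ι n hn (S₂, T₂)).Adj y x :=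
    fun x y h => ⟨h.1.symm, h.2.symm⟩
  interval_cases iv <;> interval_cases jv
  · exact absurd rfl hne
  · exact case01 a b
  · exact case02 a b
  · exact symm2 _ _ (case01 b a)
  · exact absurd rfl hne
  · exact case12 a b
  · exact symm2 _ _ (case02 b a)
  · exact symm2 _ _ (case12 b a)
  · exact absurd rfl hne

end Aux

set_option maxRecDepth 10000 in
set_option linter.constructorNameAsVariable false in
/-- For every `n ≥ 22` there is a `K_{2,2,16}`-intersecting family of
subgraphs of `K_n` of size at least `271 · 2^(C(n,2) − 76)`, and this quantity exceeds
the trivial bound `2^(C(n,2) − 68)`. -/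
theorem K2216_bound (n : ℕ) (hn : 22 ≤ n) :
    (∃ 𝓕 : Finset (SimpleGraph (Fin n)),
      IsIntersectingFamily (completeMultipartiteGraph ![Fin 2, Fin 2, Fin 16]) 𝓕 ∧
      271 * 2 ^ (n.choose 2 - 76) ≤ 𝓕.card) ∧
    271 * 2 ^ (n.choose 2 - 76) > 2 ^ (n.choose 2 - 68) := by
  have hc : 231 ≤ n.choose 2 := by
    calc (231 : ℕ) = Nat.choose 22 2 := by decide
    _ ≤ n.choose 2 := Nat.choose_le_choose 2 hn
  classical
  constructor
  · refine ⟨(D18 ×ˢ (Rest n hn).powerset).image (ι n hn), ?_, ?_⟩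
    · intro F₁ hF₁ F₂ hF₂
      rw [Finset.mem_image] at hF₁ hF₂
      obtain ⟨⟨S₁, T₁⟩, hp₁, rfl⟩ := hF₁
      obtain ⟨⟨S₂, T₂⟩, hp₂, rfl⟩ := hF₂
      rw [Finset.mem_product] at hp₁ hp₂
      exact intersecting n hn S₁ S₂ T₁ T₂ hp₁.1 hp₂.1
    · rw [Finset.card_image_of_injOn (ι_injOn n hn), Finset.card_product,
        Finset.card_powerset, D18_card, Rest_card]
  · have h68 : n.choose 2 - 68 = (n.choose 2 - 76) + 8 := by omega
    rw [h68, pow_add]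
    have hx : 0 < 2 ^ (n.choose 2 - 76) := Nat.pow_pos (by norm_num)
    calc 2 ^ (n.choose 2 - 76) * 2 ^ 8 = 256 * 2 ^ (n.choose 2 - 76) := by ring
    _ < 271 * 2 ^ (n.choose 2 - 76) := by
        exact Nat.mul_lt_mul_of_lt_of_le (by norm_num) (le_refl _) hx
end
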